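/- arXiv:2510.15014 — 4 statements merged into one kernel-verified Lean document; each statement's English description precedes it below -/
import Mathlib

section
/- Let p : (0,∞) → ℝ^{n×n} be a smooth family of affinity matrices and let F(α, y) = ∇_y L(α, y). Suppose α₀ > 0 and y⁰ ∈ D satisfy F(α₀, y⁰) = 0, the total derivative DF(α, y) has rank exactly nd − d(d+1)/2 at every point (α, y) of some open neighbourhood of (α₀, y⁰) in (0,∞) × D, and the Hessian ∇²_y L(α₀, ·) at y⁰ has rank nd − d(d+1)/2. Then there exist ε > 0 and a continuous map γ : (α₀ − ε, α₀ + ε) → D with γ(α₀) = y⁰ and F(α, γ(α)) = 0 for every α ∈ (α₀ − ε, α₀ + ε). -/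
open scoped BigOperators

noncomputable section
set_option maxHeartbeats 2000000

/-- The space of `n`-point embeddings in `ℝ^d`, identified with `ℝ^{nd}`. -/
abbrev Emb (n d : ℕ) : Type := EuclideanSpace ℝ (Fin n × Fin d)

/-- A point of `ℝ^d`. -/
abbrev Pt (d : ℕ) : Type := EuclideanSpace ℝ (Fin d)

/-- The `i`-th embedding point `y_i ∈ ℝ^d` of an embedding `y ∈ ℝ^{nd}`. -/
def pt {n d : ℕ} (y : Emb n d) (i : Fin n) : Pt d := WithLp.toLp 2 (fun a => y (i, a))

/-- The open set `D ⊆ (ℝ^d)^n` of tuples of pairwise distinct points. -/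
def Dset (n d : ℕ) : Set (Emb n d) := {y | ∀ i j : Fin n, i ≠ j → pt y i ≠ pt y j}

/-- The kernel `K_α(t) = (1 + t^{2/α})^{-α}` (real powers). -/
def Kker (α t : ℝ) : ℝ := (1 + t ^ (2 / α)) ^ (-α)

/-- `p` is an affinity matrix: symmetric, zero diagonal, positive off-diagonal entries,
and the off-diagonal entries sum to 1. -/
def IsAffinity {n : ℕ} (p : Fin n → Fin n → ℝ) : Prop :=
  (∀ i j, p i j = p j i) ∧ (∀ i, p i i = 0) ∧ (∀ i j, i ≠ j → 0 < p i j) ∧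
    ∑ i, ∑ j, (if i = j then 0 else p i j) = 1

/-- The low-dimensional affinities
`q_{ij} = K_α(‖y_i - y_j‖) / ∑_{k ≠ ℓ} K_α(‖y_k - y_ℓ‖)` for `i ≠ j`, `q_{ii} = 0`. -/
def qaff {n d : ℕ} (α : ℝ) (y : Emb n d) (i j : Fin n) : ℝ :=
  if i = j then 0 else
    Kker α (dist (pt y i) (pt y j)) /
      ∑ k, ∑ l, (if k = l then (0 : ℝ) else Kker α (dist (pt y k) (pt y l)))

/-- The t-SNE loss `L_α(y) = ∑_{i ≠ j} p_{ij} log (p_{ij}/q_{ij})`. -/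
def tsneLoss {n d : ℕ} (α : ℝ) (p : Fin n → Fin n → ℝ) (y : Emb n d) : ℝ :=
  ∑ i, ∑ j, (if i = j then 0 else p i j * Real.log (p i j / qaff α y i j))

/-- The gradient `∇L_α(y) ∈ ℝ^{nd}` of the t-SNE loss with respect to `y`. -/
def tsneGrad {n d : ℕ} (α : ℝ) (p : Fin n → Fin n → ℝ) (y : Emb n d) : Emb n d :=
  gradient (tsneLoss α p) y

/-- The Hessian `∇²L_α(y)`, viewed as a linear map `ℝ^{nd} → ℝ^{nd}`. -/
def tsneHess {n d : ℕ} (α : ℝ) (p : Fin n → Fin n → ℝ) (y : Emb n d) :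
    Emb n d →L[ℝ] Emb n d :=
  fderiv ℝ (tsneGrad α p) y

/-- The rank of the Hessian `∇²L_α(y)` (the dimension of its range). -/
def hessRank {n d : ℕ} (α : ℝ) (p : Fin n → Fin n → ℝ) (y : Emb n d) : ℕ :=
  Module.finrank ℝ (LinearMap.range (tsneHess α p y).toLinearMap)

/-- A smooth (C^∞) family of affinity matrices `p : (0,∞) → ℝ^{n×n}`. -/
def SmoothAffinityFamily {n : ℕ} (p : ℝ → Fin n → Fin n → ℝ) : Prop :=
  ContDiffOn ℝ (⊤ : ℕ∞) p (Set.Ioi 0) ∧ ∀ α > 0, IsAffinity (p α)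

/-- The map `F(α, y) = ∇_y L(α, y)` where `L(α, ·)` is the t-SNE loss with
affinities `p(α)` and kernel `K_α`. -/
def Fmap {n d : ℕ} (p : ℝ → Fin n → Fin n → ℝ) (z : ℝ × Emb n d) : Emb n d :=
  tsneGrad z.1 (p z.1) z.2

/-- The rank of the total derivative `DF(α, y)`, an `(nd) × (1 + nd)` matrix. -/
def DFRank {n d : ℕ} (p : ℝ → Fin n → Fin n → ℝ) (z : ℝ × Emb n d) : ℕ :=
  Module.finrank ℝ (LinearMap.range (fderiv ℝ (Fmap p) z).toLinearMap)


namespace TsneAux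

variable {n d : ℕ}

/-- `pt` as a continuous linear map. -/
def ptL (n d : ℕ) (i : Fin n) : Emb n d →L[ℝ] Pt d :=
  LinearMap.toContinuousLinearMap
    { toFun := fun y => pt y i
      map_add' := fun _ _ => rfl
      map_smul' := fun _ _ => by ext a; simp [pt] }

@[simp] lemma ptL_apply (i : Fin n) (y : Emb n d) : ptL n d i y = pt y i := rfl

lemma isOpen_Dset (n d : ℕ) : IsOpen (Dset n d) := by
  have : Dset n d = ⋂ (i : Fin n), ⋂ (j : Fin n), ⋂ (_ : i ≠ j),
      {y : Emb n d | pt y i ≠ pt y j} := by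
    ext y; simp [Dset, Set.mem_iInter]
  rw [this]
  refine isOpen_iInter_of_finite fun i => isOpen_iInter_of_finite fun j =>
    isOpen_iInter_of_finite fun hij => ?_
  have : {y : Emb n d | pt y i ≠ pt y j} = (fun y => ptL n d i y - ptL n d j y) ⁻¹' {0}ᶜ := by
    ext y; simp [sub_eq_zero]
  rw [this]
  exact (isOpen_compl_singleton).preimage (((ptL n d i).continuous).sub ((ptL n d j).continuous))

lemma Kker_pos {α t : ℝ} (ht : 0 ≤ t) : 0 < Kker α t := by
  have h1 : (0:ℝ) < 1 + t ^ (2/α) := by positivity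
  exact Real.rpow_pos_of_pos h1 _

lemma contDiffAt_kernel {i j : Fin n} (z : ℝ × Emb n d) (hz1 : z.1 ≠ 0)
    (hz2 : pt z.2 i ≠ pt z.2 j) :
    ContDiffAt ℝ (⊤ : ℕ∞) (fun w : ℝ × Emb n d => Kker w.1 (dist (pt w.2 i) (pt w.2 j))) z := by
  have hdist : ∀ w : ℝ × Emb n d, dist (pt w.2 i) (pt w.2 j)
      = ‖(ptL n d i - ptL n d j) w.2‖ := by
    intro w; simp [dist_eq_norm]
  have hlin : ContDiff ℝ (⊤ : ℕ∞) (fun w : ℝ × Emb n d => (ptL n d i - ptL n d j) w.2) :=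
    ((ptL n d i - ptL n d j).contDiff).comp contDiff_snd
  have hne : (ptL n d i - ptL n d j) z.2 ≠ 0 := by
    simp only [ContinuousLinearMap.sub_apply, ptL_apply]
    exact sub_ne_zero.2 hz2
  have hnorm : ContDiffAt ℝ (⊤ : ℕ∞)
      (fun w : ℝ × Emb n d => ‖(ptL n d i - ptL n d j) w.2‖) z :=
    hlin.contDiffAt.norm ℝ hne
  have hdpos : (0:ℝ) < ‖(ptL n d i - ptL n d j) z.2‖ := norm_pos_iff.2 hne
  have hexp : ContDiffAt ℝ (⊤ : ℕ∞) (fun w : ℝ × Emb n d => 2 / w.1) z :=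
    (contDiffAt_const (c := (2:ℝ))).div contDiffAt_fst hz1
  have hbase : ContDiffAt ℝ (⊤ : ℕ∞)
      (fun w : ℝ × Emb n d => 1 + ‖(ptL n d i - ptL n d j) w.2‖ ^ (2 / w.1)) z :=
    contDiffAt_const.add (hnorm.rpow hexp hdpos.ne')
  have hbpos : (0:ℝ) < 1 + ‖(ptL n d i - ptL n d j) z.2‖ ^ (2 / z.1) := by positivity
  have := hbase.rpow (contDiffAt_fst.neg) hbpos.ne'
  refine this.congr_of_eventuallyEq ?_
  refine Filter.Eventually.of_forall fun w => ?_
  simp [Kker, hdist w]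

def Ssum {n d : ℕ} (α : ℝ) (y : Emb n d) : ℝ :=
  ∑ k, ∑ l, (if k = l then (0:ℝ) else Kker α (dist (pt y k) (pt y l)))

lemma Ssum_pos (hn : 2 ≤ n) (α : ℝ) (y : Emb n d) : 0 < Ssum α y := by
  have h0 : 0 < n := by omega
  have h1 : 1 < n := by omega
  set k0 : Fin n := ⟨0, h0⟩
  set l0 : Fin n := ⟨1, h1⟩
  have h2 : k0 ≠ l0 := by simp [k0, l0, Fin.ext_iff]
  have hnn : ∀ k l : Fin n, 0 ≤ (if k = l then (0:ℝ) else Kker α (dist (pt y k) (pt y l))) := by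
    intro k l; split
    · exact le_refl _
    · exact le_of_lt (Kker_pos dist_nonneg)
  refine Finset.sum_pos' (fun k _ => Finset.sum_nonneg fun l _ => hnn k l)
    ⟨k0, Finset.mem_univ _, ?_⟩
  refine Finset.sum_pos' (fun l _ => hnn k0 l) ⟨l0, Finset.mem_univ _, ?_⟩
  simp [h2, Kker_pos dist_nonneg]

lemma contDiffAt_Ssum (z : ℝ × Emb n d) (hz1 : z.1 ≠ 0) (hz2 : z.2 ∈ Dset n d) :
    ContDiffAt ℝ (⊤ : ℕ∞) (fun w : ℝ × Emb n d => Ssum w.1 w.2) z := by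
  unfold Ssum
  refine ContDiffAt.sum fun k _ => ContDiffAt.sum fun l _ => ?_
  by_cases hkl : k = l
  · simp only [hkl, if_pos rfl]; exact contDiffAt_const
  · simp only [if_neg hkl]
    exact contDiffAt_kernel z hz1 (hz2 k l hkl)

lemma qaff_eq {i j : Fin n} (hij : i ≠ j) (α : ℝ) (y : Emb n d) :
    qaff α y i j = Kker α (dist (pt y i) (pt y j)) / Ssum α y := by
  simp [qaff, if_neg hij, Ssum]

lemma qaff_pos (hn : 2 ≤ n) {i j : Fin n} (hij : i ≠ j) (α : ℝ) (y : Emb n d) :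
    0 < qaff α y i j := by
  rw [qaff_eq hij]
  exact div_pos (Kker_pos dist_nonneg) (Ssum_pos hn α y)

lemma contDiffAt_loss (hn : 2 ≤ n) {p : ℝ → Fin n → Fin n → ℝ}
    (hp : ContDiffOn ℝ (⊤ : ℕ∞) p (Set.Ioi 0))
    (hpos : ∀ α > (0:ℝ), ∀ i j : Fin n, i ≠ j → 0 < p α i j)
    (z : ℝ × Emb n d) (hz1 : 0 < z.1) (hz2 : z.2 ∈ Dset n d) :
    ContDiffAt ℝ (⊤ : ℕ∞) (fun w : ℝ × Emb n d => tsneLoss w.1 (p w.1) w.2) z := by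
  have hpAt : ContDiffAt ℝ (⊤ : ℕ∞) p z.1 :=
    hp.contDiffAt (Ioi_mem_nhds hz1)
  unfold tsneLoss
  refine ContDiffAt.sum fun i _ => ContDiffAt.sum fun j _ => ?_
  by_cases hij : i = j
  · simp only [hij, if_pos rfl]; exact contDiffAt_const
  · simp only [if_neg hij]
    have hpij : ContDiffAt ℝ (⊤ : ℕ∞) (fun w : ℝ × Emb n d => p w.1 i j) z := by
      have h1 : ContDiffAt ℝ (⊤ : ℕ∞) (fun a : ℝ => p a i j) z.1 :=
        contDiffAt_pi.mp (contDiffAt_pi.mp hpAt i) j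
      exact h1.comp z contDiffAt_fst
    have hK : ContDiffAt ℝ (⊤ : ℕ∞)
        (fun w : ℝ × Emb n d => Kker w.1 (dist (pt w.2 i) (pt w.2 j))) z :=
      contDiffAt_kernel z hz1.ne' (hz2 i j hij)
    have hS : ContDiffAt ℝ (⊤ : ℕ∞) (fun w : ℝ × Emb n d => Ssum w.1 w.2) z :=
      contDiffAt_Ssum z hz1.ne' hz2
    have hq : ContDiffAt ℝ (⊤ : ℕ∞) (fun w : ℝ × Emb n d => qaff w.1 w.2 i j) z := by
      have := hK.div hS (Ssum_pos hn z.1 z.2).ne'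
      exact this.congr_of_eventuallyEq
        (Filter.Eventually.of_forall fun w => qaff_eq hij w.1 w.2)
    have hppos : 0 < p z.1 i j := hpos z.1 hz1 i j hij
    have hqpos : 0 < qaff z.1 z.2 i j := qaff_pos hn hij z.1 z.2
    have harg : ContDiffAt ℝ (⊤ : ℕ∞)
        (fun w : ℝ × Emb n d => p w.1 i j / qaff w.1 w.2 i j) z :=
      hpij.div hq hqpos.ne'
    exact hpij.mul (harg.log (by positivity))

lemma contDiffAt_Fmap (hn : 2 ≤ n) {p : ℝ → Fin n → Fin n → ℝ}
    (hp : ContDiffOn ℝ (⊤ : ℕ∞) p (Set.Ioi 0))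
    (hpos : ∀ α > (0:ℝ), ∀ i j : Fin n, i ≠ j → 0 < p α i j)
    (z : ℝ × Emb n d) (hz1 : 0 < z.1) (hz2 : z.2 ∈ Dset n d) :
    ContDiffAt ℝ (⊤ : ℕ∞) (Fmap p) z := by
  have hL : ContDiffAt ℝ (⊤ : ℕ∞) (fun w : ℝ × Emb n d => tsneLoss w.1 (p w.1) w.2) z :=
    contDiffAt_loss hn hp hpos z hz1 hz2
  set m : (ℝ × Emb n d) × Emb n d →L[ℝ] ℝ × Emb n d :=
    ((ContinuousLinearMap.fst ℝ ℝ (Emb n d)).comp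
      (ContinuousLinearMap.fst ℝ (ℝ × Emb n d) (Emb n d))).prod
      (ContinuousLinearMap.snd ℝ (ℝ × Emb n d) (Emb n d)) with hm
  have hmz : m (z, z.2) = z := by
    simp [hm]
  have hUnc : ContDiffAt ℝ (⊤ : ℕ∞)
      (Function.uncurry (fun (w : ℝ × Emb n d) (y : Emb n d) => tsneLoss w.1 (p w.1) y))
      (z, z.2) := by
    have : Function.uncurry (fun (w : ℝ × Emb n d) (y : Emb n d) => tsneLoss w.1 (p w.1) y)
        = (fun w : ℝ × Emb n d => tsneLoss w.1 (p w.1) w.2) ∘ m := by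
      funext w; rfl
    rw [this]
    exact ContDiffAt.comp _ (hmz ▸ hL) m.contDiff.contDiffAt
  have hfd : ContDiffAt ℝ (⊤ : ℕ∞)
      (fun w : ℝ × Emb n d =>
        fderiv ℝ (fun y => tsneLoss w.1 (p w.1) y) w.2) z :=
    ContDiffAt.fderiv hUnc contDiffAt_snd (by simp)
  have heq : Fmap p = (fun w : ℝ × Emb n d =>
      (InnerProductSpace.toDual ℝ (Emb n d)).symm
        (fderiv ℝ (fun y => tsneLoss w.1 (p w.1) y) w.2)) := by
    funext w; rfl
  rw [heq]
  exact ((InnerProductSpace.toDual ℝ (Emb n d)).symm.toContinuousLinearEquiv :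
      _ ≃L[ℝ] _).contDiff.comp_contDiffAt z hfd

lemma compl_add_eq_zero {E : Type*} [AddCommGroup E] [Module ℝ E]
    {R C : Submodule ℝ E} (h : IsCompl R C) {a b : E} (ha : a ∈ R) (hb : b ∈ C)
    (hab : a + b = 0) : a = 0 ∧ b = 0 := by
  have hb' : a = -b := by rw [eq_neg_iff_add_eq_zero]; exact hab
  have : a ∈ R ⊓ C := ⟨ha, by rw [hb']; exact C.neg_mem hb⟩
  rw [h.inf_eq_bot] at this
  simp only [Submodule.mem_bot] at this
  exact ⟨this, by rw [this] at hb'; simpa using hb'.symm⟩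

end TsneAux

/-- If `F(α₀, y⁰) = 0`, `DF` has rank exactly `nd - d(d+1)/2` on an open
neighbourhood of `(α₀, y⁰)` in `(0,∞) × D`, and the Hessian `∇²_y L(α₀, ·)` at `y⁰` has rank
`nd - d(d+1)/2`, then there is a continuous path `γ` of zeros of `F` through `y⁰`. -/
theorem tree_sne_continuous_path
    (n d : ℕ) (hn : 3 ≤ n) (hd : 1 ≤ d)
    (p : ℝ → Fin n → Fin n → ℝ) (hp : SmoothAffinityFamily p)
    (α₀ : ℝ) (hα₀ : 0 < α₀) (y₀ : Emb n d) (hy₀ : y₀ ∈ Dset n d)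
    (hF : Fmap p (α₀, y₀) = 0)
    (hrank : ∃ U : Set (ℝ × Emb n d), IsOpen U ∧ (α₀, y₀) ∈ U ∧
      U ⊆ Set.Ioi (0 : ℝ) ×ˢ Dset n d ∧
      ∀ z ∈ U, DFRank p z = n * d - d * (d + 1) / 2)
    (hhess : hessRank α₀ (p α₀) y₀ = n * d - d * (d + 1) / 2) :
    ∃ ε > 0, ∃ γ : ℝ → Emb n d,
      ContinuousOn γ (Set.Ioo (α₀ - ε) (α₀ + ε)) ∧
      γ α₀ = y₀ ∧
      ∀ α ∈ Set.Ioo (α₀ - ε) (α₀ + ε), γ α ∈ Dset n d ∧ Fmap p (α, γ α) = 0 := by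
  classical
  obtain ⟨hpC, hpA⟩ := hp
  have hn2 : 2 ≤ n := by omega
  have hpos : ∀ α > (0:ℝ), ∀ i j : Fin n, i ≠ j → 0 < p α i j :=
    fun α hα i j hij => (hpA α hα).2.2.1 i j hij
  set r : ℕ := n * d - d * (d + 1) / 2 with hr
  set S : Set (ℝ × Emb n d) := Set.Ioi 0 ×ˢ Dset n d with hSdef
  have hSopen : IsOpen S := isOpen_Ioi.prod (TsneAux.isOpen_Dset n d)
  set z₀ : ℝ × Emb n d := (α₀, y₀) with hz₀def
  have hz₀S : z₀ ∈ S := ⟨hα₀, hy₀⟩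
  have hFsm : ∀ z ∈ S, ContDiffAt ℝ (⊤ : ℕ∞) (Fmap p) z := fun z hz =>
    TsneAux.contDiffAt_Fmap hn2 hpC hpos z hz.1 hz.2
  obtain ⟨U, hUopen, hz₀U, hUS, hUrank⟩ := hrank
  set D : ℝ × Emb n d → (ℝ × Emb n d →L[ℝ] Emb n d) := fun z => fderiv ℝ (Fmap p) z with hDdef
  have hdiff : ∀ z ∈ S, DifferentiableAt ℝ (Fmap p) z := fun z hz =>
    (hFsm z hz).differentiableAt (by simp)
  have hD₀ : HasFDerivAt (Fmap p) (D z₀) z₀ := (hdiff z₀ hz₀S).hasFDerivAt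
  set H : Emb n d →L[ℝ] Emb n d := tsneHess α₀ (p α₀) y₀ with hHdef
  have hHD : H = (D z₀).comp (ContinuousLinearMap.inr ℝ ℝ (Emb n d)) := by
    have h1 : HasFDerivAt (fun y : Emb n d => Fmap p (α₀, y))
        ((D z₀).comp (ContinuousLinearMap.inr ℝ ℝ (Emb n d))) y₀ :=
      hD₀.comp y₀ (hasFDerivAt_prodMk_right α₀ y₀)
    have h2 : (fun y : Emb n d => Fmap p (α₀, y)) = tsneGrad α₀ (p α₀) := rfl
    rw [hHdef, tsneHess, ← h2]
    exact h1.fderiv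
  -- ranks
  have hRrank : Module.finrank ℝ (LinearMap.range (D z₀).toLinearMap) = r := hUrank z₀ hz₀U
  have hHrank : Module.finrank ℝ (LinearMap.range H.toLinearMap) = r := hhess
  have hRle : LinearMap.range H.toLinearMap ≤ LinearMap.range (D z₀).toLinearMap := by
    rintro x ⟨w, rfl⟩
    refine ⟨((0:ℝ), w), ?_⟩
    rw [hHD]; rfl
  have hRange : LinearMap.range H.toLinearMap = LinearMap.range (D z₀).toLinearMap :=
    Submodule.eq_of_le_of_finrank_eq hRle (by rw [hHrank, hRrank])
  set R : Submodule ℝ (Emb n d) := LinearMap.range H.toLinearMap with hRdef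
  obtain ⟨C, hC⟩ := Submodule.exists_isCompl R
  set K' : Submodule ℝ (Emb n d) := LinearMap.ker H.toLinearMap with hK'def
  obtain ⟨W, hW⟩ := Submodule.exists_isCompl K'
  have hKC : Module.finrank ℝ K' = Module.finrank ℝ C := by
    have e1 : Module.finrank ℝ R + Module.finrank ℝ C = Module.finrank ℝ (Emb n d) :=
      Submodule.finrank_add_eq_of_isCompl hC
    have e2 : Module.finrank ℝ R + Module.finrank ℝ K' = Module.finrank ℝ (Emb n d) :=
      LinearMap.finrank_range_add_finrank_ker H.toLinearMap
    omega
  let ι : K' ≃ₗ[ℝ] C := (FiniteDimensional.nonempty_linearEquiv_of_finrank_eq hKC).some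
  set projR : Emb n d →ₗ[ℝ] R := R.projectionOnto C hC with hprojR
  set projK : Emb n d →ₗ[ℝ] K' := K'.projectionOnto W hW with hprojK
  set P : Emb n d →L[ℝ] Emb n d :=
    LinearMap.toContinuousLinearMap (R.subtype ∘ₗ projR) with hPdef
  set J : Emb n d →L[ℝ] Emb n d :=
    LinearMap.toContinuousLinearMap (C.subtype ∘ₗ ι.toLinearMap ∘ₗ projK) with hJdef
  have hPmem : ∀ x, P x ∈ R := fun x => (projR x).2
  have hPid : ∀ x, x ∈ R → P x = x := by
    intro x hx
    have : projR x = ⟨x, hx⟩ := by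
      have := Submodule.linearProjOfIsCompl_apply_left hC (⟨x, hx⟩ : R)
      simpa [hprojR] using this
    simp [hPdef, this]
  have hJmem : ∀ x, J x ∈ C := fun x => (ι (projK x)).2
  have hJW : ∀ x, J x = 0 → x ∈ W := by
    intro x hx
    have h1 : (ι (projK x) : Emb n d) = 0 := hx
    have h2 : ι (projK x) = 0 := by exact_mod_cast Subtype.ext h1
    have h3 : projK x = 0 := by
      simpa using congrArg ι.symm h2
    have : x ∈ LinearMap.ker projK := h3
    rwa [hprojK, Submodule.linearProjOfIsCompl_ker] at this
  -- the auxiliary diffeomorphism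
  set Ψ : ℝ × Emb n d → ℝ × Emb n d := fun w => (w.1, P (Fmap p w) + J w.2) with hΨdef
  set Ψ' : (ℝ × Emb n d) →L[ℝ] (ℝ × Emb n d) :=
    (ContinuousLinearMap.fst ℝ ℝ (Emb n d)).prod
      (P.comp (D z₀) + J.comp (ContinuousLinearMap.snd ℝ ℝ (Emb n d))) with hΨ'def
  have hΨ'apply : ∀ w : ℝ × Emb n d, Ψ' w = (w.1, P (D z₀ w) + J w.2) := fun w => rfl
  have hker : ∀ w : ℝ × Emb n d, Ψ' w = 0 → w = 0 := by
    rintro ⟨s, v⟩ hw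
    rw [hΨ'apply] at hw
    have hs : s = 0 := congrArg Prod.fst hw
    have h2 : P (D z₀ (s, v)) + J v = 0 := congrArg Prod.snd hw
    subst hs
    have hDv : D z₀ ((0:ℝ), v) = H v := by rw [hHD]; rfl
    rw [hDv] at h2
    obtain ⟨hP0, hJ0⟩ := TsneAux.compl_add_eq_zero hC (hPmem _) (hJmem _) h2
    have hvW : v ∈ W := hJW v hJ0
    have hHv : H v = 0 := by
      have hm : H v ∈ R := ⟨v, rfl⟩
      rw [hPid _ hm] at hP0
      exact hP0
    have hvK : v ∈ K' := hHv
    have hv0 : v = 0 := by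
      have : v ∈ K' ⊓ W := ⟨hvK, hvW⟩
      rwa [hW.inf_eq_bot, Submodule.mem_bot] at this
    simp [hv0]
  have hΨ'bij : Function.Bijective Ψ'.toLinearMap := by
    have hinj : Function.Injective Ψ'.toLinearMap := by
      rw [← LinearMap.ker_eq_bot, LinearMap.ker_eq_bot']
      intro w hw
      exact hker w hw
    exact ⟨hinj, (LinearMap.injective_iff_surjective).mp hinj⟩
  let Ψe : (ℝ × Emb n d) ≃L[ℝ] (ℝ × Emb n d) :=
    (LinearEquiv.ofBijective Ψ'.toLinearMap hΨ'bij).toContinuousLinearEquiv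
  have hΨecoe : (Ψe : (ℝ × Emb n d) →L[ℝ] (ℝ × Emb n d)) = Ψ' := by
    ext w <;> rfl
  have hΨd : HasFDerivAt Ψ Ψ' z₀ := by
    have h1 : HasFDerivAt (fun w : ℝ × Emb n d => w.1)
        (ContinuousLinearMap.fst ℝ ℝ (Emb n d)) z₀ := hasFDerivAt_fst
    have h2 : HasFDerivAt (fun w : ℝ × Emb n d => P (Fmap p w)) (P.comp (D z₀)) z₀ :=
      P.hasFDerivAt.comp z₀ hD₀
    have h3 : HasFDerivAt (fun w : ℝ × Emb n d => J w.2)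
        (J.comp (ContinuousLinearMap.snd ℝ ℝ (Emb n d))) z₀ :=
      (J.comp (ContinuousLinearMap.snd ℝ ℝ (Emb n d))).hasFDerivAt
    exact h1.prodMk (h2.add h3)
  have hΨsm : ContDiffAt ℝ (⊤ : ℕ∞) Ψ z₀ := by
    refine contDiffAt_fst.prodMk (ContDiffAt.add ?_ ?_)
    · exact P.contDiff.contDiffAt.comp z₀ (hFsm z₀ hz₀S)
    · exact (J.comp (ContinuousLinearMap.snd ℝ ℝ (Emb n d))).contDiff.contDiffAt
  have hΨde : HasFDerivAt Ψ (Ψe : (ℝ × Emb n d) →L[ℝ] (ℝ × Emb n d)) z₀ := by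
    rw [hΨecoe]; exact hΨd
  have hn1 : ((⊤ : ℕ∞) : WithTop ℕ∞) ≠ 0 := by simp
  set inv : ℝ × Emb n d → ℝ × Emb n d := hΨsm.localInverse hΨde hn1 with hinvdef
  have hstrict : HasStrictFDerivAt Ψ (Ψe : (ℝ × Emb n d) →L[ℝ] (ℝ × Emb n d)) z₀ :=
    hΨsm.hasStrictFDerivAt' hΨde hn1
  have hinv_sm : ContDiffAt ℝ (⊤ : ℕ∞) inv (Ψ z₀) := hΨsm.to_localInverse hΨde hn1
  have hinv_at : inv (Ψ z₀) = z₀ := hΨsm.localInverse_apply_image hΨde hn1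
  have hright : ∀ᶠ b in nhds (Ψ z₀), Ψ (inv b) = b := hstrict.eventually_right_inverse
  set c : Emb n d := J y₀ with hcdef
  have hΨz₀ : Ψ z₀ = (α₀, c) := by
    have : Fmap p z₀ = 0 := hF
    simp [hΨdef, hz₀def, this, hcdef, show Fmap p (α₀, y₀) = 0 from hF]
  set γ : ℝ → Emb n d := fun α => (inv (α, c)).2 with hγdef
  have hγα₀ : γ α₀ = y₀ := by
    have : inv (α₀, c) = z₀ := by rw [← hΨz₀, hinv_at]
    simp [hγdef, this, hz₀def]
  -- the key kernel lemma on a neighbourhood of z₀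
  have hDcont : ContinuousOn D S := by
    have hcd : ContDiffOn ℝ (⊤ : ℕ∞) (Fmap p) S := fun z hz => (hFsm z hz).contDiffWithinAt
    exact hcd.continuousOn_fderiv_of_isOpen hSopen (by simp)
  have hfinR : Module.finrank ℝ R = r := hHrank
  let b : Module.Basis (Fin r) ℝ R := Module.finBasisOfFinrankEq ℝ R hfinR
  have hbmem : ∀ i : Fin r, (b i : Emb n d) ∈ LinearMap.range (D z₀).toLinearMap := by
    intro i; rw [← hRange]; exact (b i).2
  choose v hv using hbmem
  set G : (ℝ × Emb n d) → (Fin r → Emb n d) := fun z i => P (D z (v i)) with hGdef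
  have hGz₀ : ∀ i, G z₀ i = (b i : Emb n d) := by
    intro i
    have : D z₀ (v i) = (b i : Emb n d) := hv i
    rw [hGdef]; simp only []
    rw [this]
    exact hPid _ (b i).2
  have hGind : LinearIndependent ℝ (G z₀) := by
    have h1 : LinearIndependent ℝ (fun i : Fin r => (b i : Emb n d)) := by
      have := b.linearIndependent
      exact this.map' R.subtype R.ker_subtype
    have : G z₀ = fun i : Fin r => (b i : Emb n d) := funext hGz₀
    rw [this]
    exact h1
  have hGcont : ContinuousAt G z₀ := by
    have hDAt : ContinuousAt D z₀ := hDcont.continuousAt (hSopen.mem_nhds hz₀S)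
    rw [continuousAt_pi]
    intro i
    exact P.continuous.continuousAt.comp
      (((ContinuousLinearMap.apply ℝ (Emb n d) (v i)).continuous.continuousAt).comp hDAt)
  have hGev : ∀ᶠ z in nhds z₀, LinearIndependent ℝ (G z) := by
    have hopen : IsOpen {f : Fin r → Emb n d | LinearIndependent ℝ f} :=
      isOpen_setOf_linearIndependent
    exact hGcont.eventually_mem (hopen.mem_nhds hGind)
  have hkeyev : ∀ᶠ z in nhds z₀,
      ∀ w : ℝ × Emb n d, P (D z w) = 0 → D z w = 0 := by
    have hUev : ∀ᶠ z in nhds z₀, z ∈ U := hUopen.mem_nhds hz₀U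
    filter_upwards [hGev, hUev] with z hGz hzU
    intro w hPw
    have hrz : Module.finrank ℝ (LinearMap.range (D z).toLinearMap) = r := hUrank z hzU
    set T : ℝ × Emb n d →L[ℝ] Emb n d := P.comp (D z) with hTdef
    have hTr_le : Module.finrank ℝ (LinearMap.range T.toLinearMap) ≤ r := by
      have : T.toLinearMap = P.toLinearMap ∘ₗ (D z).toLinearMap := rfl
      rw [this, LinearMap.range_comp]
      have hle2 : Module.finrank ℝ
          (Submodule.map P.toLinearMap (LinearMap.range (D z).toLinearMap))
          ≤ Module.finrank ℝ (LinearMap.range (D z).toLinearMap) :=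
        Submodule.finrank_map_le _ _
      rw [hrz] at hle2
      exact hle2
    have hTr_ge : r ≤ Module.finrank ℝ (LinearMap.range T.toLinearMap) := by
      have hmemT : ∀ i : Fin r, G z i ∈ LinearMap.range T.toLinearMap := fun i => ⟨v i, rfl⟩
      have hspan : Submodule.span ℝ (Set.range (G z)) ≤ LinearMap.range T.toLinearMap := by
        rw [Submodule.span_le]
        rintro x ⟨i, rfl⟩
        exact hmemT i
      have hcard : Module.finrank ℝ (Submodule.span ℝ (Set.range (G z))) = r := by
        rw [finrank_span_eq_card hGz, Fintype.card_fin]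
      rw [← hcard]
      exact Submodule.finrank_mono hspan
    have hTr : Module.finrank ℝ (LinearMap.range T.toLinearMap) = r := le_antisymm hTr_le hTr_ge
    have hkle : LinearMap.ker (D z).toLinearMap ≤ LinearMap.ker T.toLinearMap :=
      LinearMap.ker_le_ker_comp _ _
    have hkeq : LinearMap.ker (D z).toLinearMap = LinearMap.ker T.toLinearMap := by
      have e1 : Module.finrank ℝ (LinearMap.range (D z).toLinearMap)
          + Module.finrank ℝ (LinearMap.ker (D z).toLinearMap)
          = Module.finrank ℝ (ℝ × Emb n d) :=
        LinearMap.finrank_range_add_finrank_ker (D z).toLinearMap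
      have e2 : Module.finrank ℝ (LinearMap.range T.toLinearMap)
          + Module.finrank ℝ (LinearMap.ker T.toLinearMap)
          = Module.finrank ℝ (ℝ × Emb n d) :=
        LinearMap.finrank_range_add_finrank_ker T.toLinearMap
      refine Submodule.eq_of_le_of_finrank_le hkle ?_
      omega
    have hwT : w ∈ LinearMap.ker T.toLinearMap := by
      simp only [LinearMap.mem_ker]
      exact hPw
    rw [← hkeq] at hwT
    simpa using hwT
  -- eventual properties along the curve
  obtain ⟨V, hV𝓝, hVsm⟩ : ∃ u ∈ nhds (Ψ z₀), ContDiffOn ℝ 1 inv u :=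
    hinv_sm.contDiffOn (by simp) (by simp)
  have hVint : interior V ∈ nhds (Ψ z₀) := interior_mem_nhds.mpr hV𝓝
  have tcurve : Filter.Tendsto (fun α : ℝ => ((α : ℝ), c)) (nhds α₀) (nhds (Ψ z₀)) := by
    rw [hΨz₀]
    exact (continuous_id.prodMk continuous_const).tendsto α₀
  have E1 : ∀ᶠ α in nhds α₀, Ψ (inv (α, c)) = (α, c) := tcurve.eventually hright
  have E2 : ∀ᶠ α in nhds α₀, DifferentiableAt ℝ γ α := by
    have h := tcurve.eventually (eventually_mem_nhds_iff.mpr hVint)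
    filter_upwards [h] with α hα
    have hinvd : DifferentiableAt ℝ inv (α, c) := by
      have hmem : V ∈ nhds (α, c) := by
        filter_upwards [hα] with x hx
        exact interior_subset hx
      exact ((hVsm.differentiableOn one_ne_zero).differentiableAt hmem)
    have : DifferentiableAt ℝ (fun a : ℝ => inv (a, c)) α :=
      hinvd.comp α ((differentiableAt_id.prodMk (differentiableAt_const c)))
    exact (differentiable_snd.differentiableAt).comp α this
  have hγcont : ContinuousAt γ α₀ := by
    have h2 : ContinuousAt inv (α₀, c) := by rw [← hΨz₀]; exact hinv_sm.continuousAt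
    have h1 : ContinuousAt (fun α : ℝ => ((α : ℝ), c)) α₀ :=
      (continuous_id.prodMk continuous_const).continuousAt
    have h3 : ContinuousAt (fun α : ℝ => inv (α, c)) α₀ :=
      ContinuousAt.comp (f := fun α : ℝ => ((α : ℝ), c)) h2 h1
    exact ContinuousAt.comp (g := Prod.snd) (f := fun α : ℝ => inv (α, c))
      continuous_snd.continuousAt h3
  have ηt : Filter.Tendsto (fun α : ℝ => ((α : ℝ), γ α)) (nhds α₀) (nhds z₀) := by
    have : Filter.Tendsto (fun α : ℝ => ((α : ℝ), γ α)) (nhds α₀) (nhds (α₀, γ α₀)) :=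
      (continuousAt_id.prodMk hγcont).tendsto
    rwa [hγα₀] at this
  have E3 : ∀ᶠ α in nhds α₀,
      ((α : ℝ), γ α) ∈ S ∧ (∀ w : ℝ × Emb n d, P (D (α, γ α) w) = 0 → D (α, γ α) w = 0) := by
    have h1 := ηt.eventually_mem (hSopen.mem_nhds hz₀S)
    have h2 := ηt.eventually hkeyev
    filter_upwards [h1, h2] with α hα1 hα2
    exact ⟨hα1, hα2⟩
  have E4 : ∀ᶠ α in nhds α₀, P (Fmap p (α, γ α)) = 0 := by
    filter_upwards [E1] with α hα
    set w : ℝ × Emb n d := inv (α, c) with hwdef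
    have hw1 : w.1 = α := congrArg Prod.fst hα
    have hw2 : P (Fmap p w) + J w.2 = c := congrArg Prod.snd hα
    have hwe : w = (α, γ α) := by
      rw [Prod.ext_iff]
      exact ⟨hw1, rfl⟩
    rw [hwe] at hw2
    have hJy : P (Fmap p (α, γ α)) + J (γ α) = J y₀ := by rw [hw2]
    have hsum : P (Fmap p (α, γ α)) + (J (γ α) - J y₀) = 0 := by
      have hre : P (Fmap p (α, γ α)) + (J (γ α) - J y₀)
          = (P (Fmap p (α, γ α)) + J (γ α)) - J y₀ := by abel
      rw [hre, hJy, sub_self]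
    have := TsneAux.compl_add_eq_zero hC (hPmem _) (C.sub_mem (hJmem _) (hJmem _)) hsum
    exact this.1
  -- extract an interval
  obtain ⟨ε, hε, hball⟩ := Metric.eventually_nhds_iff_ball.mp (E2.and (E3.and E4))
  set I : Set ℝ := Set.Ioo (α₀ - ε) (α₀ + ε) with hIdef
  have hmemI : ∀ α ∈ I, DifferentiableAt ℝ γ α ∧
      (((α : ℝ), γ α) ∈ S ∧
        (∀ w : ℝ × Emb n d, P (D (α, γ α) w) = 0 → D (α, γ α) w = 0)) ∧
      P (Fmap p (α, γ α)) = 0 := by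
    intro α hα
    exact hball α (by rw [Real.ball_eq_Ioo]; exact hα)
  have hα₀I : α₀ ∈ I := by
    constructor <;> simp [hIdef] <;> linarith
  set g : ℝ → Emb n d := fun a => Fmap p (a, γ a) with hgdef
  have hg0 : ∀ α ∈ I, HasDerivAt g 0 α := by
    intro α hα
    obtain ⟨hγd, ⟨hαS, hαkey⟩, _⟩ := hmemI α hα
    have hγ' : HasDerivAt γ (deriv γ α) α := hγd.hasDerivAt
    have hcurve : HasDerivAt (fun a : ℝ => ((a : ℝ), γ a)) ((1 : ℝ), deriv γ α) α :=
      (hasDerivAt_id α).prodMk hγ'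
    have hFd : HasFDerivAt (Fmap p) (D (α, γ α)) (α, γ α) := (hdiff _ hαS).hasFDerivAt
    have hgD : HasDerivAt g (D (α, γ α) ((1 : ℝ), deriv γ α)) α :=
      by have := hFd.comp_hasDerivAt α hcurve; exact this
    have hPg : HasDerivAt (fun a : ℝ => P (g a)) (P (D (α, γ α) ((1 : ℝ), deriv γ α))) α :=
      P.hasFDerivAt.comp_hasDerivAt α hgD
    have hPg0 : HasDerivAt (fun a : ℝ => P (g a)) 0 α := by
      have hev : (fun a : ℝ => P (g a)) =ᶠ[nhds α] (fun _ : ℝ => (0 : Emb n d)) := by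
        have hIop : IsOpen I := isOpen_Ioo
        filter_upwards [hIop.mem_nhds hα] with a ha
        exact (hmemI a ha).2.2
      exact (hasDerivAt_const α (0 : Emb n d)).congr_of_eventuallyEq hev
    have hPD0 : P (D (α, γ α) ((1 : ℝ), deriv γ α)) = 0 := hPg.unique hPg0
    have hD0 : D (α, γ α) ((1 : ℝ), deriv γ α) = 0 := hαkey _ hPD0
    rwa [hD0] at hgD
  have hgconst : ∀ α ∈ I, g α = g α₀ := by
    intro α hα
    have hconv : Convex ℝ I := convex_Ioo _ _
    have hder : ∀ x ∈ I, HasDerivWithinAt g ((fun _ : ℝ => (0 : Emb n d)) x) I x :=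
      fun x hx => (hg0 x hx).hasDerivWithinAt
    have hbound : ∀ x ∈ I, ‖(fun _ : ℝ => (0 : Emb n d)) x‖ ≤ 0 := by
      intro x _; simp
    have := hconv.norm_image_sub_le_of_norm_hasDerivWithin_le hder hbound hα₀I hα
    have hle : ‖g α - g α₀‖ ≤ 0 := by simpa using this
    have : g α - g α₀ = 0 := by
      have := norm_le_zero_iff.mp hle
      exact this
    exact sub_eq_zero.mp this
  have hgα₀ : g α₀ = 0 := by
    rw [hgdef]
    simp only []
    rw [hγα₀]
    exact hF
  refine ⟨ε, hε, γ, ?_, hγα₀, ?_⟩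
  · intro α hα
    exact ((hmemI α hα).1.continuousAt).continuousWithinAt
  · intro α hα
    refine ⟨(hmemI α hα).2.1.1.2, ?_⟩
    have := hgconst α hα
    rw [hgα₀] at this
    exact this
end
end

section
/- Fix an affinity matrix p and take α = 1, so that K_1(t) = (1 + t²)^{−1}. Then for every y ∈ D and every index i, the gradient of the t-SNE loss with respect to y_i is given by ∇_{y_i} L_1(y) = 4 Σ_{j≠i} (p_{ij} − q_{ij}) (1 + ‖y_i − y_j‖²)^{−1} (y_i − y_j). -/
open scoped BigOperators

noncomputable section

namespace TA
variable {n d : ℕ}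

def sq2 (k l : Fin n) (y : Emb n d) : ℝ := ∑ a, (y (k,a) - y (l,a))^2

lemma sq2_nonneg (k l : Fin n) (y : Emb n d) : 0 ≤ sq2 k l y :=
  Finset.sum_nonneg fun _ _ => sq_nonneg _

lemma one_add_sq2_pos (k l : Fin n) (y : Emb n d) : 0 < 1 + sq2 k l y := by
  linarith [sq2_nonneg k l y]

lemma sq2_symm (k l : Fin n) (y : Emb n d) : sq2 k l y = sq2 l k y := by
  unfold sq2; congr 1; funext a; ring

lemma sq2_eq_norm (k l : Fin n) (y : Emb n d) :
    sq2 k l y = ‖pt y k - pt y l‖^2 := by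
  rw [EuclideanSpace.norm_eq, Real.sq_sqrt (by positivity)]
  unfold sq2; congr 1; funext a
  simp [pt, Real.norm_eq_abs, sq_abs]

lemma Kker_eq (k l : Fin n) (y : Emb n d) :
    Kker 1 (dist (pt y k) (pt y l)) = (1 + sq2 k l y)⁻¹ := by
  unfold Kker
  rw [sq2_eq_norm, ← dist_eq_norm]
  norm_num [Real.rpow_two, Real.rpow_neg_one]

def Sval (y : Emb n d) : ℝ := ∑ k, ∑ l, (if k = l then (0:ℝ) else (1 + sq2 k l y)⁻¹)

lemma Sval_pos (hn : 3 ≤ n) (y : Emb n d) : 0 < Sval y := by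
  have nn : ∀ k l : Fin n, 0 ≤ (if k = l then (0:ℝ) else (1 + sq2 k l y)⁻¹) := by
    intro k l; split_ifs
    · exact le_refl 0
    · exact inv_nonneg.mpr (one_add_sq2_pos k l y).le
  unfold Sval
  apply Finset.sum_pos' (fun k _ => Finset.sum_nonneg fun l _ => nn k l)
  refine ⟨⟨0, by omega⟩, Finset.mem_univ _,
    Finset.sum_pos' (fun l _ => nn _ l) ⟨⟨1, by omega⟩, Finset.mem_univ _, ?_⟩⟩
  rw [if_neg (fun h => by simp [Fin.ext_iff] at h)]
  exact inv_pos.mpr (one_add_sq2_pos _ _ y)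

lemma qaff_eq (y : Emb n d) (k l : Fin n) :
    qaff 1 y k l = if k = l then 0 else (1 + sq2 k l y)⁻¹ / Sval y := by
  unfold qaff Sval
  simp only [Kker_eq]

lemma qaff_symm (y : Emb n d) (k l : Fin n) : qaff 1 y k l = qaff 1 y l k := by
  rw [qaff_eq, qaff_eq, sq2_symm]
  exact if_congr eq_comm rfl rfl

lemma qaff_pos (hn : 3 ≤ n) (y : Emb n d) {k l : Fin n} (h : k ≠ l) :
    0 < qaff 1 y k l := by
  rw [qaff_eq, if_neg h]
  exact div_pos (inv_pos.mpr (one_add_sq2_pos k l y)) (Sval_pos hn y)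

lemma loss_eq (hn : 3 ≤ n) (p : Fin n → Fin n → ℝ) (hp : IsAffinity p) (y : Emb n d) :
    tsneLoss 1 p y =
      (∑ i, ∑ j, (if i = j then 0 else p i j * Real.log (p i j)))
      + ((∑ i, ∑ j, (if i = j then 0 else p i j * Real.log (1 + sq2 i j y)))
        + Real.log (Sval y)) := by
  obtain ⟨hsym, hdiag, hpos, hsum⟩ := hp
  have key : ∀ i j : Fin n, (if i = j then 0 else p i j * Real.log (p i j / qaff 1 y i j))
      = (if i = j then 0 else p i j * Real.log (p i j))
      + ((if i = j then 0 else p i j * Real.log (1 + sq2 i j y))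
        + (if i = j then 0 else p i j) * Real.log (Sval y)) := by
    intro i j
    by_cases h : i = j
    · simp [h]
    · simp only [if_neg h]
      rw [Real.log_div (ne_of_gt (hpos i j h)) (ne_of_gt (qaff_pos hn y h)),
        qaff_eq, if_neg h, Real.log_div (ne_of_gt (inv_pos.mpr (one_add_sq2_pos i j y)))
          (ne_of_gt (Sval_pos hn y)), Real.log_inv]
      ring
  unfold tsneLoss
  simp only [key, Finset.sum_add_distrib, ← Finset.sum_mul, hsum]
  ring

def Dg (k l : Fin n) (y : Emb n d) : Emb n d →L[ℝ] ℝ :=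
  ∑ a, (2*(y (k,a) - y (l,a))) • (EuclideanSpace.proj (k,a) - EuclideanSpace.proj (l,a))

lemma hasF_sq2 (k l : Fin n) (y : Emb n d) : HasFDerivAt (sq2 k l) (Dg k l y) y := by
  unfold sq2 Dg
  apply HasFDerivAt.fun_sum
  intro a _
  have h : HasFDerivAt (fun y : Emb n d => y (k,a) - y (l,a))
      ((EuclideanSpace.proj (k,a) : Emb n d →L[ℝ] ℝ) - EuclideanSpace.proj (l,a)) y := by
    have := (ContinuousLinearMap.hasFDerivAt (x := y)
        (f := (EuclideanSpace.proj (k,a) : Emb n d →L[ℝ] ℝ))).sub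
      (ContinuousLinearMap.hasFDerivAt (x := y)
        (f := (EuclideanSpace.proj (l,a) : Emb n d →L[ℝ] ℝ)))
    exact this
  have h2 := (hasDerivAt_pow 2 (y (k,a) - y (l,a))).comp_hasFDerivAt y h
  exact h2.congr_fderiv (by simp)

lemma hasF_inv (k l : Fin n) (y : Emb n d) :
    HasFDerivAt (fun y => (1 + sq2 k l y)⁻¹)
      ((-((1 + sq2 k l y)^2)⁻¹) • Dg k l y) y :=
  (hasDerivAt_inv (ne_of_gt (one_add_sq2_pos k l y))).comp_hasFDerivAt y
    ((hasF_sq2 k l y).const_add 1)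

lemma Dg_single (k l i : Fin n) (a : Fin d) (y : Emb n d) :
    Dg k l y (EuclideanSpace.single (i,a) (1:ℝ)) =
      2*(y (k,a) - y (l,a)) * ((if k = i then (1:ℝ) else 0) - (if l = i then 1 else 0)) := by
  unfold Dg
  rw [ContinuousLinearMap.sum_apply]
  rw [Finset.sum_eq_single a]
  · simp [EuclideanSpace.single_apply, Prod.ext_iff]
  · intro b _ hb
    simp [EuclideanSpace.single_apply, Prod.ext_iff, hb]
  · simp

def DS (y : Emb n d) : Emb n d →L[ℝ] ℝ :=
  ∑ k, ∑ l, if k = l then 0 else (-((1 + sq2 k l y)^2)⁻¹) • Dg k l y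

lemma hasF_Sval (y : Emb n d) : HasFDerivAt (Sval (n := n) (d := d)) (DS y) y := by
  unfold Sval DS
  apply HasFDerivAt.fun_sum; intro k _
  apply HasFDerivAt.fun_sum; intro l _
  by_cases h : k = l
  · simpa [h] using hasFDerivAt_const (0:ℝ) y
  · simp only [if_neg h]; exact hasF_inv k l y

def Lg (p : Fin n → Fin n → ℝ) (y : Emb n d) : Emb n d →L[ℝ] ℝ :=
  (∑ k, ∑ l, if k = l then 0 else (p k l * (1 + sq2 k l y)⁻¹) • Dg k l y)
    + (Sval y)⁻¹ • DS y

lemma hasF_loss (hn : 3 ≤ n) (p : Fin n → Fin n → ℝ) (hp : IsAffinity p) (y : Emb n d) :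
    HasFDerivAt (tsneLoss 1 p) (Lg p y) y := by
  have hrw : tsneLoss 1 p = fun y : Emb n d =>
      (∑ i, ∑ j, (if i = j then 0 else p i j * Real.log (p i j)))
      + ((∑ i, ∑ j, (if i = j then 0 else p i j * Real.log (1 + sq2 i j y)))
        + Real.log (Sval y)) := funext (loss_eq hn p hp)
  rw [hrw]
  unfold Lg
  apply HasFDerivAt.const_add
  apply HasFDerivAt.add
  · apply HasFDerivAt.fun_sum; intro k _
    apply HasFDerivAt.fun_sum; intro l _
    by_cases h : k = l
    · simpa [h] using hasFDerivAt_const (0:ℝ) y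
    · simp only [if_neg h]
      have := (((hasF_sq2 k l y).const_add 1).log
          (ne_of_gt (one_add_sq2_pos k l y))).const_mul (p k l)
      rw [smul_smul] at this
      exact this
  · exact (hasF_Sval y).log (ne_of_gt (Sval_pos hn y))

lemma grad_apply (hn : 3 ≤ n) (p : Fin n → Fin n → ℝ) (hp : IsAffinity p) (y : Emb n d)
    (e : Fin n × Fin d) :
    gradient (tsneLoss 1 p) y e = Lg p y (EuclideanSpace.single e 1) := by
  have hg : gradient (tsneLoss 1 p) y =
      (InnerProductSpace.toDual ℝ (Emb n d)).symm (Lg p y) := by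
    unfold gradient
    rw [(hasF_loss hn p hp y).fderiv]
  rw [hg]
  have h1 := InnerProductSpace.toDual_symm_apply (𝕜 := ℝ) (E := Emb n d)
      (y := Lg p y) (x := EuclideanSpace.single e 1)
  rw [← h1, EuclideanSpace.inner_single_right]
  simp

lemma Lg_single (hn : 3 ≤ n) (p : Fin n → Fin n → ℝ) (hp : IsAffinity p) (y : Emb n d)
    (i : Fin n) (a : Fin d) :
    Lg p y (EuclideanSpace.single (i,a) (1:ℝ)) =
      4 * ∑ j ∈ Finset.univ.erase i,
        (p i j - qaff 1 y i j) * (1 + sq2 i j y)⁻¹ * (y (i,a) - y (j,a)) := by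
  have hS : Sval y ≠ 0 := (Sval_pos hn y).ne'
  set c : Fin n → Fin n → ℝ := fun k l => (p k l - qaff 1 y k l) * (1 + sq2 k l y)⁻¹ with hc
  have happ : Lg p y (EuclideanSpace.single (i,a) (1:ℝ))
      = ∑ k, ∑ l, (if k = l then 0 else
          c k l * (Dg k l y (EuclideanSpace.single (i,a) 1))) := by
    unfold Lg DS
    simp only [ContinuousLinearMap.add_apply, ContinuousLinearMap.smul_apply,
      ContinuousLinearMap.sum_apply,
      apply_ite (fun T : Emb n d →L[ℝ] ℝ => T (EuclideanSpace.single (i,a) 1)),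
      ContinuousLinearMap.zero_apply, smul_eq_mul, Finset.mul_sum, mul_ite, mul_zero]
    rw [← Finset.sum_add_distrib]
    apply Finset.sum_congr rfl; intro k _
    rw [← Finset.sum_add_distrib]
    apply Finset.sum_congr rfl; intro l _
    by_cases h : k = l
    · simp [h]
    · simp only [if_neg h]
      have h1 : (1:ℝ) + sq2 k l y ≠ 0 := (one_add_sq2_pos k l y).ne'
      simp only [hc]
      rw [qaff_eq, if_neg h]
      field_simp
      ring
  rw [happ]
  simp only [Dg_single]
  have split : ∀ k l : Fin n, (if k = l then (0:ℝ) else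
      c k l * (2*(y (k,a) - y (l,a)) * ((if k = i then (1:ℝ) else 0) - (if l = i then 1 else 0))))
    = (if k = l then 0 else (if k = i then c k l * (2*(y (k,a) - y (l,a))) else 0))
      - (if k = l then 0 else (if l = i then c k l * (2*(y (k,a) - y (l,a))) else 0)) := by
    intro k l; split_ifs <;> ring
  simp only [split, Finset.sum_sub_distrib]
  have h1 : (∑ k, ∑ l, (if k = l then (0:ℝ) else
        (if k = i then c k l * (2*(y (k,a) - y (l,a))) else 0)))
      = ∑ l, (if i = l then 0 else c i l * (2*(y (i,a) - y (l,a)))) := by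
    rw [Finset.sum_eq_single i]
    · apply Finset.sum_congr rfl; intro l _; simp
    · intro k _ hk
      apply Finset.sum_eq_zero; intro l _
      simp [hk]
    · simp
  have h2 : (∑ k, ∑ l, (if k = l then (0:ℝ) else
        (if l = i then c k l * (2*(y (k,a) - y (l,a))) else 0)))
      = ∑ k, (if k = i then 0 else c k i * (2*(y (k,a) - y (i,a)))) := by
    rw [Finset.sum_comm]
    rw [Finset.sum_eq_single i]
    · apply Finset.sum_congr rfl; intro k _
      by_cases h : k = i <;> simp [h]
    · intro l _ hl
      apply Finset.sum_eq_zero; intro k _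
      simp [hl]
    · simp
  rw [h1, h2]
  have csymm : ∀ k l, c k l = c l k := by
    intro k l
    rw [hc]
    simp only [hp.1 k l, qaff_symm, sq2_symm]
  have hT : ∀ k : Fin n, (if k = i then (0:ℝ) else c k i * (2*(y (k,a) - y (i,a))))
      = -(if i = k then 0 else c i k * (2*(y (i,a) - y (k,a)))) := by
    intro k
    by_cases h : k = i
    · simp [h]
    · rw [if_neg h, if_neg (Ne.symm h), csymm k i]
      ring
  simp only [hT, Finset.sum_neg_distrib, sub_neg_eq_add]
  have herase : ∑ l, (if i = l then (0:ℝ) else c i l * (2*(y (i,a) - y (l,a))))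
      = ∑ l ∈ Finset.univ.erase i, c i l * (2*(y (i,a) - y (l,a))) := by
    rw [← Finset.add_sum_erase _ _ (Finset.mem_univ i), if_pos rfl, zero_add]
    apply Finset.sum_congr rfl
    intro l hl
    rw [if_neg (Ne.symm (Finset.ne_of_mem_erase hl))]
  rw [herase, ← two_mul, Finset.mul_sum, Finset.mul_sum]
  apply Finset.sum_congr rfl
  intro j hj
  simp only [hc]
  ring

lemma pt_sum_apply {ι : Type*} (s : Finset ι) (f : ι → Pt d) (a : Fin d) :
    (∑ j ∈ s, f j) a = ∑ j ∈ s, f j a := by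
  simp [WithLp.ofLp_sum]

end TA

/-- For `α = 1` (so `K_1(t) = (1+t²)⁻¹`), the partial gradient of the t-SNE
loss with respect to `y_i` is
`∇_{y_i} L_1(y) = 4 ∑_{j≠i} (p_{ij} - q_{ij}) (1 + ‖y_i - y_j‖²)⁻¹ (y_i - y_j)`. -/
theorem tsne_gradient_formula
    (n d : ℕ) (hn : 3 ≤ n) (hd : 1 ≤ d)
    (p : Fin n → Fin n → ℝ) (hp : IsAffinity p)
    (y : Emb n d) (hy : y ∈ Dset n d) (i : Fin n) :
    pt (tsneGrad 1 p y) i =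
      (4 : ℝ) • ∑ j ∈ Finset.univ.erase i,
        ((p i j - qaff 1 y i j) * (1 + ‖pt y i - pt y j‖ ^ 2)⁻¹) • (pt y i - pt y j) := by
  ext a
  have lhs : pt (tsneGrad 1 p y) i a = gradient (tsneLoss 1 p) y (i,a) := rfl
  rw [lhs, TA.grad_apply hn p hp y (i,a), TA.Lg_single hn p hp y i a]
  rw [PiLp.smul_apply, TA.pt_sum_apply, smul_eq_mul]
  congr 1
  apply Finset.sum_congr rfl
  intro j _
  rw [PiLp.smul_apply, PiLp.sub_apply, smul_eq_mul, ← TA.sq2_eq_norm]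
  rfl
end
end

section
/- Fix α > 0 and an affinity matrix p. Let y ∈ D be a critical point of the t-SNE loss, i.e. ∇L_α(y) = 0. Then for every skew-symmetric d×d matrix A (Aᵀ = −A) and every v ∈ ℝ^d, the vector (Ay_1 + v, …, Ay_n + v) ∈ ℝ^{nd} lies in the kernel of the Hessian ∇²L_α(y). -/
open scoped BigOperators

noncomputable section

section AuxiliaryRigid

open scoped Matrix
open InnerProductSpace NormedSpace

lemma sum_sq_mulVec {d : ℕ} (R : Matrix (Fin d) (Fin d) ℝ) (h : R.transpose * R = 1)
    (w : Pt d) : ∑ a, (R.mulVec w a) ^ 2 = ∑ a, (w a) ^ 2 := by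
  have h1 : (R.mulVec w) ⬝ᵥ (R.mulVec w) = w ⬝ᵥ w := by
    rw [Matrix.dotProduct_mulVec, ← Matrix.mulVec_transpose, Matrix.mulVec_mulVec, h,
      Matrix.one_mulVec]
  simpa [dotProduct, pow_two] using h1

/-- the action of a `d×d` matrix on a point. -/
def matAct {d : ℕ} (R : Matrix (Fin d) (Fin d) ℝ) (w : Pt d) : Pt d := WithLp.toLp 2 (fun a => R.mulVec w a)

lemma norm_matrix_act {d : ℕ} (R : Matrix (Fin d) (Fin d) ℝ) (h : R.transpose * R = 1)
    (w : Pt d) : ‖matAct R w‖ = ‖w‖ := by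
  rw [EuclideanSpace.norm_eq, EuclideanSpace.norm_eq]
  congr 1
  simpa [matAct, Real.norm_eq_abs, sq_abs] using sum_sq_mulVec R h w

/-- Orthogonal block action on `Emb n d`. -/
def rigidO (n d : ℕ) (R : Matrix (Fin d) (Fin d) ℝ) (h : R.transpose * R = 1) :
    Emb n d ≃ₗᵢ[ℝ] Emb n d where
  toLinearEquiv :=
  { toFun := fun x => WithLp.toLp 2 (fun ia : Fin n × Fin d => R.mulVec (pt x ia.1) ia.2)
    invFun := fun x => WithLp.toLp 2 (fun ia : Fin n × Fin d => R.transpose.mulVec (pt x ia.1) ia.2)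
    map_add' := by
      intro x z; ext ia
      show R.mulVec (pt (x + z) ia.1) ia.2 = R.mulVec (pt x ia.1) ia.2 + R.mulVec (pt z ia.1) ia.2
      simp [pt, Matrix.mulVec, dotProduct, mul_add, Finset.sum_add_distrib]
    map_smul' := by
      intro c x; ext ia
      show R.mulVec (pt (c • x) ia.1) ia.2 = c * R.mulVec (pt x ia.1) ia.2
      simp only [pt, Matrix.mulVec, dotProduct, Finset.mul_sum, PiLp.smul_apply,
        smul_eq_mul]
      exact Finset.sum_congr rfl fun b _ => by ring
    left_inv := by
      intro x; ext ia
      show R.transpose.mulVec (fun a => R.mulVec (pt x ia.1) a) ia.2 = x ia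
      rw [show (fun a => R.mulVec (pt x ia.1) a) = R.mulVec (pt x ia.1) from rfl,
        Matrix.mulVec_mulVec, h, Matrix.one_mulVec]
      rfl
    right_inv := by
      intro x; ext ia
      show R.mulVec (fun a => R.transpose.mulVec (pt x ia.1) a) ia.2 = x ia
      rw [show (fun a => R.transpose.mulVec (pt x ia.1) a) = R.transpose.mulVec (pt x ia.1)
          from rfl, Matrix.mulVec_mulVec, mul_eq_one_comm.mp h, Matrix.one_mulVec]
      rfl }
  norm_map' := by
    intro x
    rw [EuclideanSpace.norm_eq, EuclideanSpace.norm_eq]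
    congr 1
    rw [Fintype.sum_prod_type, Fintype.sum_prod_type]
    refine Finset.sum_congr rfl fun i _ => ?_
    simpa [pt, Real.norm_eq_abs, sq_abs] using sum_sq_mulVec R h (pt x i)

lemma rigidO_apply {n d : ℕ} (R : Matrix (Fin d) (Fin d) ℝ) (h : R.transpose * R = 1)
    (x : Emb n d) : rigidO n d R h x = WithLp.toLp 2 (fun ia : Fin n × Fin d => R.mulVec (pt x ia.1) ia.2) := rfl

/-- translation embedding -/
def trEmb (n : ℕ) {d : ℕ} (b : Pt d) : Emb n d := WithLp.toLp 2 (fun ia : Fin n × Fin d => b ia.2)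

lemma dist_rigid {n d : ℕ} (R : Matrix (Fin d) (Fin d) ℝ) (h : R.transpose * R = 1)
    (b : Pt d) (x : Emb n d) (i j : Fin n) :
    dist (pt (rigidO n d R h x + trEmb n b) i) (pt (rigidO n d R h x + trEmb n b) j)
      = dist (pt x i) (pt x j) := by
  rw [dist_eq_norm, dist_eq_norm]
  have key : pt (rigidO n d R h x + trEmb n b) i - pt (rigidO n d R h x + trEmb n b) j
      = matAct R (pt x i - pt x j) := by
    ext a
    have h2 : ∀ k : Fin n, pt (rigidO n d R h x + trEmb n b) k a
        = R.mulVec (pt x k) a + b a := by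
      intro k
      show (rigidO n d R h x + trEmb n b) (k, a) = _
      rw [show (rigidO n d R h x + trEmb n b) (k, a)
          = rigidO n d R h x (k, a) + trEmb n b (k, a) from rfl, rigidO_apply]
      rfl
    show pt (rigidO n d R h x + trEmb n b) i a - pt (rigidO n d R h x + trEmb n b) j a
        = matAct R (pt x i - pt x j) a
    rw [h2 i, h2 j]
    simp only [matAct, Matrix.mulVec, dotProduct, PiLp.sub_apply, mul_sub,
      Finset.sum_sub_distrib]
    ring
  rw [key, norm_matrix_act R h]

lemma loss_rigid {n d : ℕ} (α : ℝ) (p : Fin n → Fin n → ℝ) (R : Matrix (Fin d) (Fin d) ℝ)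
    (h : R.transpose * R = 1) (b : Pt d) (x : Emb n d) :
    tsneLoss α p (rigidO n d R h x + trEmb n b) = tsneLoss α p x := by
  simp only [tsneLoss, qaff, dist_rigid R h b x]

lemma gradient_comp_isometry {F : Type*} [NormedAddCommGroup F] [InnerProductSpace ℝ F]
    [CompleteSpace F] (f : F → ℝ) (e : F ≃ₗᵢ[ℝ] F) (b : F)
    (h : ∀ z, f (e z + b) = f z) (x : F) :
    gradient f (e x + b) = e (gradient f x) := by
  by_cases hd : DifferentiableAt ℝ f (e x + b)
  · have hΦ : HasFDerivAt (fun z : F => e z + b)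
        (e.toContinuousLinearEquiv : F →L[ℝ] F) x :=
      ((e.toContinuousLinearEquiv : F →L[ℝ] F).hasFDerivAt).add_const b
    have hcomp := hd.hasFDerivAt.comp x hΦ
    simp only [Function.comp_def] at hcomp
    rw [show (fun z => f (e z + b)) = f from funext h] at hcomp
    have hfx : fderiv ℝ f x
        = (fderiv ℝ f (e x + b)).comp (e.toContinuousLinearEquiv : F →L[ℝ] F) :=
      hcomp.fderiv
    refine ext_inner_right ℝ fun w => ?_
    have l1 : ⟪gradient f (e x + b), w⟫_ℝ = fderiv ℝ f (e x + b) w :=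
      InnerProductSpace.toDual_symm_apply
    have l2 : ⟪gradient f x, e.symm w⟫_ℝ = fderiv ℝ f x (e.symm w) :=
      InnerProductSpace.toDual_symm_apply
    rw [l1, show (w : F) = e (e.symm w) from (e.apply_symm_apply w).symm]
    calc fderiv ℝ f (e x + b) (e (e.symm w))
        = fderiv ℝ f x (e.symm w) := by rw [hfx]; rfl
      _ = ⟪gradient f x, e.symm w⟫_ℝ := l2.symm
      _ = ⟪e (gradient f x), e (e.symm w)⟫_ℝ := (e.inner_map_map _ _).symm
  · have hd' : ¬ DifferentiableAt ℝ f x := by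
      intro hx
      apply hd
      have hfeq : f = fun z => f (e.symm (z - b)) := by
        funext z
        have := h (e.symm (z - b))
        rw [e.apply_symm_apply, sub_add_cancel] at this
        exact this
      rw [hfeq]
      have hin : DifferentiableAt ℝ (fun z : F => e.symm (z - b)) (e x + b) :=
        (e.symm.toContinuousLinearEquiv : F →L[ℝ] F).differentiableAt.comp _
          (differentiableAt_id.sub_const b)
      have hx' : DifferentiableAt ℝ f (e.symm (e x + b - b)) := by
        rw [add_sub_cancel_right, e.symm_apply_apply]; exact hx
      have := DifferentiableAt.comp (e x + b) hx' hin
      simpa [Function.comp_def] using this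
    rw [gradient, gradient, fderiv_zero_of_not_differentiableAt hd,
      fderiv_zero_of_not_differentiableAt hd']
    simp

lemma exp_skew_orth {d : ℕ} (A : Matrix (Fin d) (Fin d) ℝ) (hA : A.transpose = -A) (t : ℝ) :
    (exp (t • A)).transpose * exp (t • A) = 1 := by
  have h1 : (exp (t • A)).transpose = exp (-(t • A)) := by
    rw [← Matrix.exp_transpose, Matrix.transpose_smul, hA, smul_neg]
  rw [h1, ← Matrix.exp_add_of_commute (-(t • A)) (t • A) (Commute.refl (t • A)).neg_left,
    neg_add_cancel, exp_zero]

lemma expPhi_hasDerivAt {d : ℕ} (A : Matrix (Fin d) (Fin d) ℝ) {E : Type*}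
    [NormedAddCommGroup E] [NormedSpace ℝ E] (φ : Matrix (Fin d) (Fin d) ℝ →ₗ[ℝ] E) :
    HasDerivAt (fun t : ℝ => φ (exp (t • A))) (φ A) 0 := by
  letI : SeminormedRing (Matrix (Fin d) (Fin d) ℝ) := Matrix.linftyOpSemiNormedRing
  letI : NormedRing (Matrix (Fin d) (Fin d) ℝ) := Matrix.linftyOpNormedRing
  letI : NormedAlgebra ℝ (Matrix (Fin d) (Fin d) ℝ) := Matrix.linftyOpNormedAlgebra
  haveI : CompleteSpace (Matrix (Fin d) (Fin d) ℝ) := FiniteDimensional.complete ℝ _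
  have HD : HasDerivAt (fun t : ℝ => exp (t • A)) (exp ((0 : ℝ) • A) * A) 0 :=
    hasDerivAt_exp_smul_const A (0 : ℝ)
  rw [zero_smul, exp_zero, one_mul] at HD
  have := (LinearMap.toContinuousLinearMap φ).hasFDerivAt.comp_hasDerivAt 0 HD
  exact this

/-- The linear map `M ↦ (fun ia => M.mulVec (pt y ia.1) ia.2)`. -/
def psiMap (n d : ℕ) (y : Emb n d) : Matrix (Fin d) (Fin d) ℝ →ₗ[ℝ] Emb n d where
  toFun := fun M => WithLp.toLp 2 (fun ia : Fin n × Fin d => M.mulVec (pt y ia.1) ia.2)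
  map_add' := by
    intro M N; ext ia
    show (M + N).mulVec (pt y ia.1) ia.2 = M.mulVec (pt y ia.1) ia.2 + N.mulVec (pt y ia.1) ia.2
    rw [Matrix.add_mulVec]
    rfl
  map_smul' := by
    intro c M; ext ia
    show (c • M).mulVec (pt y ia.1) ia.2 = c * M.mulVec (pt y ia.1) ia.2
    rw [Matrix.smul_mulVec]
    rfl

end AuxiliaryRigid

/-- At a critical point `y` of the t-SNE loss, for every skew-symmetric
`d×d` matrix `A` and every `v ∈ ℝ^d`, the vector `(Ay_1 + v, …, Ay_n + v) ∈ ℝ^{nd}` lies in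
the kernel of the Hessian `∇²L_α(y)`. -/
theorem tsne_hessian_kernel_rigid_directions
    (n d : ℕ) (hn : 3 ≤ n) (hd : 1 ≤ d)
    (α : ℝ) (hα : 0 < α) (p : Fin n → Fin n → ℝ) (hp : IsAffinity p)
    (y : Emb n d) (hy : y ∈ Dset n d) (hcrit : tsneGrad α p y = 0)
    (A : Matrix (Fin d) (Fin d) ℝ) (hA : A.transpose = -A) (v : Pt d) :
    tsneHess α p y (WithLp.toLp 2 (fun ia : Fin n × Fin d => A.mulVec (pt y ia.1) ia.2 + v ia.2)) = 0 := by
  classical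
  set w : Emb n d := WithLp.toLp 2 (fun ia : Fin n × Fin d => A.mulVec (pt y ia.1) ia.2 + v ia.2) with hw
  -- the rigid motion curve
  set c : ℝ → Emb n d := fun t =>
    rigidO n d (NormedSpace.exp (t • A)) (exp_skew_orth A hA t) y + trEmb n (t • v) with hc
  -- the gradient vanishes along the curve
  have hgrad : ∀ t, tsneGrad α p (c t) = 0 := by
    intro t
    show gradient (tsneLoss α p) (c t) = 0
    rw [hc]
    rw [gradient_comp_isometry (tsneLoss α p)
      (rigidO n d (NormedSpace.exp (t • A)) (exp_skew_orth A hA t)) (trEmb n (t • v))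
      (fun z => loss_rigid α p _ (exp_skew_orth A hA t) (t • v) z) y,
      show gradient (tsneLoss α p) y = 0 from hcrit, map_zero]
  -- initial point
  have hc0 : c 0 = y := by
    ext ia
    show (NormedSpace.exp ((0 : ℝ) • A)).mulVec (pt y ia.1) ia.2 + ((0 : ℝ) • v) ia.2 = y ia
    rw [zero_smul, NormedSpace.exp_zero, Matrix.one_mulVec]
    simp [pt]
  -- derivative of the curve at 0
  have hder : HasDerivAt c w 0 := by
    have h1 : HasDerivAt (fun t : ℝ => psiMap n d y (NormedSpace.exp (t • A)))
        (psiMap n d y A) 0 := expPhi_hasDerivAt A (psiMap n d y)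
    have h2 : HasDerivAt (fun t : ℝ => t • trEmb n v) ((1 : ℝ) • trEmb n v) 0 :=
      (hasDerivAt_id (0 : ℝ)).smul_const (trEmb n v)
    have h3 := h1.add h2
    have hceq : (fun t : ℝ => psiMap n d y (NormedSpace.exp (t • A)) + t • trEmb n v) = c := by
      funext t
      rfl
    have hweq : psiMap n d y A + (1 : ℝ) • trEmb n v = w := by
      ext ia
      show A.mulVec (pt y ia.1) ia.2 + (1 : ℝ) * v ia.2 = A.mulVec (pt y ia.1) ia.2 + v ia.2
      rw [one_mul]
    rw [← hceq, ← hweq]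
    exact h3
  by_cases hdiff : DifferentiableAt ℝ (tsneGrad α p) y
  · have hF : HasFDerivAt (tsneGrad α p) (fderiv ℝ (tsneGrad α p) y) (c 0) := by
      rw [hc0]; exact hdiff.hasFDerivAt
    have hcomp : HasDerivAt (fun t => tsneGrad α p (c t))
        (fderiv ℝ (tsneGrad α p) y w) 0 := hF.comp_hasDerivAt 0 hder
    rw [show (fun t => tsneGrad α p (c t)) = fun _ => (0 : Emb n d) from funext hgrad] at hcomp
    have := hcomp.unique (hasDerivAt_const 0 0)
    exact this
  · show fderiv ℝ (tsneGrad α p) y w = 0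
    rw [fderiv_zero_of_not_differentiableAt hdiff]
    rfl
end
end

section
/- Fix α > 0 and an affinity matrix p. Let y ∈ D be a critical point of the t-SNE loss (∇L_α(y) = 0) such that the points y_1, …, y_n affinely span ℝ^d. Then the rank of the Hessian ∇²L_α(y) is at most nd − d(d+1)/2. -/
open scoped BigOperators

noncomputable section

section Aux
open InnerProductSpace

variable {n d : ℕ}

/-- The constant embedding all of whose points are `c`. -/
def trv (n : ℕ) {d : ℕ} (c : Pt d) : Emb n d := WithLp.toLp 2 (fun q => c q.2)

lemma pt_add_trv (x : Emb n d) (c : Pt d) (i : Fin n) :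
    pt (x + trv n c) i = pt x i + c := rfl

lemma tsneLoss_congr (α : ℝ) (p : Fin n → Fin n → ℝ) {x x' : Emb n d}
    (h : ∀ i j, dist (pt x' i) (pt x' j) = dist (pt x i) (pt x j)) :
    tsneLoss α p x' = tsneLoss α p x := by
  simp only [tsneLoss, qaff, h]

lemma fderiv_shift (f : Emb n d → ℝ) (c x : Emb n d) :
    fderiv ℝ (fun z => f (z + c)) x = fderiv ℝ f (x + c) := by
  by_cases h : DifferentiableAt ℝ f (x + c)
  · have h2 : HasFDerivAt (fun z => f (z + c))
        ((fderiv ℝ f (x + c)).comp (ContinuousLinearMap.id ℝ (Emb n d))) x :=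
      h.hasFDerivAt.comp x ((hasFDerivAt_id x).add_const c)
    simpa using h2.fderiv
  · have h' : ¬ DifferentiableAt ℝ (fun z => f (z + c)) x := by
      intro hc
      apply h
      have hc' : DifferentiableAt ℝ (fun z => f (z + c)) ((x + c) - c) := by
        simpa using hc
      have h4 := hc'.comp (x + c) ((differentiable_id.sub_const c).differentiableAt)
      have : ((fun z => f (z + c)) ∘ fun z : Emb n d => id z - c) = f := by
        funext z; simp [Function.comp]
      rwa [this] at h4
    rw [fderiv_zero_of_not_differentiableAt h, fderiv_zero_of_not_differentiableAt h']

lemma tsneGrad_translate (α : ℝ) (p : Fin n → Fin n → ℝ) (c : Pt d) (x : Emb n d) :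
    tsneGrad α p (x + trv n c) = tsneGrad α p x := by
  unfold tsneGrad gradient
  rw [← fderiv_shift (tsneLoss α p) (trv n c) x]
  congr 1
  have : (fun z => tsneLoss α p (z + trv n c)) = tsneLoss α p := by
    funext z
    exact tsneLoss_congr α p (fun i j => by rw [pt_add_trv, pt_add_trv, dist_add_right])
  rw [this]

end Aux
section Aux2
open InnerProductSpace

variable {n d : ℕ}

lemma gradient_zero_of_isometry (f : Emb n d → ℝ) (g : Emb n d ≃ₗᵢ[ℝ] Emb n d)
    (hf : ∀ x, f (g x) = f x) {y : Emb n d} (h0 : gradient f y = 0) :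
    gradient f (g y) = 0 := by
  have hD : fderiv ℝ f y = 0 := by
    have := congrArg (toDual ℝ (Emb n d)) h0
    simpa [gradient] using this
  have hfg : (f ∘ (g.symm : Emb n d → Emb n d)) = f := by
    funext z
    have := hf (g.symm z)
    simp only [Function.comp]
    rw [g.apply_symm_apply] at this
    rw [this]
  by_cases h : DifferentiableAt ℝ f y
  · have h1 : HasFDerivAt f 0 y := hD ▸ h.hasFDerivAt
    have hsym : HasFDerivAt (g.symm : Emb n d → Emb n d)
        (g.symm.toContinuousLinearEquiv : Emb n d →L[ℝ] Emb n d) (g y) :=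
      g.symm.toContinuousLinearEquiv.hasFDerivAt
    have h2 : HasFDerivAt (f ∘ (g.symm : Emb n d → Emb n d))
        ((0 : Emb n d →L[ℝ] ℝ).comp (g.symm.toContinuousLinearEquiv : Emb n d →L[ℝ] Emb n d))
        (g y) := by
      refine HasFDerivAt.comp (g y) ?_ hsym
      rwa [g.symm_apply_apply]
    rw [hfg] at h2
    simp only [ContinuousLinearMap.zero_comp] at h2
    simp [gradient, h2.fderiv]
  · have h' : ¬ DifferentiableAt ℝ f (g y) := by
      intro hc
      apply h
      have h4 := hc.comp y (g.toContinuousLinearEquiv.differentiableAt)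
      have : (f ∘ ⇑g) = f := funext hf
      change DifferentiableAt ℝ (f ∘ ⇑g) y at h4
      rwa [this] at h4
    simp [gradient, fderiv_zero_of_not_differentiableAt h']

end Aux2
section Aux3
open InnerProductSpace

variable {n d : ℕ}

/-- Rotation by angle `θ` in the plane of coordinates `a`, `b`. -/
def rotF (θ : ℝ) (a b : Fin d) (u : Pt d) : Pt d :=
  WithLp.toLp 2 (fun e => if e = a then Real.cos θ * u a - Real.sin θ * u b
    else if e = b then Real.sin θ * u a + Real.cos θ * u b else u e)

lemma sum_mul_rotF (θ : ℝ) {a b : Fin d} (hab : a ≠ b) (u v : Pt d) :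
    ∑ e, rotF θ a b u e * rotF θ a b v e = ∑ e, u e * v e := by
  have hzero : ∀ e ∈ (Finset.univ : Finset (Fin d)), e ∉ ({a, b} : Finset (Fin d)) →
      rotF θ a b u e * rotF θ a b v e - u e * v e = 0 := by
    intro e _ he
    simp only [Finset.mem_insert, Finset.mem_singleton, not_or] at he
    simp [rotF, he.1, he.2]
  have hd2 : ∑ e, (rotF θ a b u e * rotF θ a b v e - u e * v e) = 0 := by
    rw [← Finset.sum_subset (Finset.subset_univ ({a, b} : Finset (Fin d))) hzero]
    rw [Finset.sum_pair hab]
    simp only [rotF, PiLp.toLp_apply, if_pos rfl, if_neg hab.symm, if_neg hab, if_pos rfl, if_true, ite_true]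
    linear_combination (u a * v a + u b * v b) * (Real.sin_sq_add_cos_sq θ)
  have := Finset.sum_sub_distrib (f := fun e => rotF θ a b u e * rotF θ a b v e)
    (g := fun e => u e * v e) (s := Finset.univ)
  rw [this] at hd2
  linarith
end Aux3
section Aux4
open InnerProductSpace

variable {n d : ℕ}

/-- Blockwise rotation, as a linear map on embeddings. -/
def embRotL (n : ℕ) {d : ℕ} (θ : ℝ) (a b : Fin d) : Emb n d →ₗ[ℝ] Emb n d where
  toFun x := WithLp.toLp 2 (fun q => rotF θ a b (pt x q.1) q.2)
  map_add' x z := by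
    ext q
    simp only [rotF, pt, PiLp.add_apply, PiLp.toLp_apply]
    split_ifs <;> ring
  map_smul' r x := by
    ext q
    simp only [rotF, pt, PiLp.smul_apply, RingHom.id_apply, smul_eq_mul, PiLp.toLp_apply]
    split_ifs <;> ring

lemma embRotL_comp (θ : ℝ) {a b : Fin d} (hab : a ≠ b) (x : Emb n d) :
    embRotL n (-θ) a b (embRotL n θ a b x) = x := by
  ext q
  simp only [embRotL, LinearMap.coe_mk, AddHom.coe_mk, rotF, pt, Real.cos_neg, Real.sin_neg, PiLp.toLp_apply]
  by_cases h1 : q.2 = a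
  · simp only [h1, if_pos rfl, if_neg hab.symm, if_neg hab, if_true, ite_true]
    have : x q = x (q.1, a) := by rw [← h1]
    rw [this]
    linear_combination x (q.1, a) * (Real.sin_sq_add_cos_sq θ)
  · by_cases h2 : q.2 = b
    · simp only [h2, if_neg hab.symm, if_neg h1, if_pos rfl, if_neg hab, if_true, ite_true]
      have : x q = x (q.1, b) := by rw [← h2]
      rw [this]
      linear_combination x (q.1, b) * (Real.sin_sq_add_cos_sq θ)
    · simp only [if_neg h1, if_neg h2]

/-- Blockwise rotation as a linear equivalence. -/
def embRotE (n : ℕ) {d : ℕ} (θ : ℝ) {a b : Fin d} (hab : a ≠ b) : Emb n d ≃ₗ[ℝ] Emb n d :=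
  LinearEquiv.ofLinear (embRotL n θ a b) (embRotL n (-θ) a b)
    (by
      apply LinearMap.ext; intro x
      simp only [LinearMap.comp_apply, LinearMap.id_apply]
      simpa using embRotL_comp (-θ) hab x)
    (by
      apply LinearMap.ext; intro x
      simp only [LinearMap.comp_apply, LinearMap.id_apply]
      exact embRotL_comp θ hab x)

/-- Blockwise rotation as a linear isometry equivalence. -/
def embRotIso (n : ℕ) {d : ℕ} (θ : ℝ) {a b : Fin d} (hab : a ≠ b) : Emb n d ≃ₗᵢ[ℝ] Emb n d :=
  (embRotE n θ hab).isometryOfInner (by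
    intro x z
    simp only [PiLp.inner_apply, RCLike.inner_apply, conj_trivial]
    rw [Fintype.sum_prod_type, Fintype.sum_prod_type]
    refine Finset.sum_congr rfl fun i _ => ?_
    exact sum_mul_rotF θ hab (pt z i) (pt x i))

lemma embRotIso_apply (θ : ℝ) {a b : Fin d} (hab : a ≠ b) (x : Emb n d) (q : Fin n × Fin d) :
    embRotIso n θ hab x q = rotF θ a b (pt x q.1) q.2 := rfl

end Aux4
section Aux5
open InnerProductSpace

variable {n d : ℕ}

lemma rotF_sub (θ : ℝ) (a b : Fin d) (u v : Pt d) :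
    rotF θ a b u - rotF θ a b v = rotF θ a b (u - v) := by
  ext e
  simp only [rotF, PiLp.sub_apply, PiLp.toLp_apply]
  split_ifs <;> ring

lemma norm_rotF (θ : ℝ) {a b : Fin d} (hab : a ≠ b) (w : Pt d) :
    ‖rotF θ a b w‖ = ‖w‖ := by
  rw [EuclideanSpace.norm_eq, EuclideanSpace.norm_eq]
  congr 1
  have h := sum_mul_rotF θ hab w w
  simp only [Real.norm_eq_abs, sq_abs]
  simpa [pow_two] using h

lemma dist_rotF (θ : ℝ) {a b : Fin d} (hab : a ≠ b) (u v : Pt d) :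
    dist (rotF θ a b u) (rotF θ a b v) = dist u v := by
  rw [dist_eq_norm, dist_eq_norm, rotF_sub, norm_rotF θ hab]

lemma pt_embRotIso (θ : ℝ) {a b : Fin d} (hab : a ≠ b) (x : Emb n d) (i : Fin n) :
    pt (embRotIso n θ hab x) i = rotF θ a b (pt x i) := rfl

lemma tsneGrad_rot_zero (α : ℝ) (p : Fin n → Fin n → ℝ) {y : Emb n d}
    (h0 : tsneGrad α p y = 0) (θ : ℝ) {a b : Fin d} (hab : a ≠ b) :
    tsneGrad α p (embRotIso n θ hab y) = 0 := by
  unfold tsneGrad at *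
  refine gradient_zero_of_isometry (tsneLoss α p) (embRotIso n θ hab) (fun x => ?_) h0
  refine tsneLoss_congr α p (fun i j => ?_)
  rw [pt_embRotIso θ hab, pt_embRotIso θ hab, dist_rotF θ hab]

end Aux5
section Aux6
open InnerProductSpace

variable {n d : ℕ}

/-- Infinitesimal rotation generator applied to `y`. -/
def Jvec (a b : Fin d) (y : Emb n d) : Emb n d :=
  WithLp.toLp 2 (fun q => if q.2 = a then -y (q.1, b) else if q.2 = b then y (q.1, a) else 0)

lemma tsneHess_trv (α : ℝ) (p : Fin n → Fin n → ℝ) {y : Emb n d}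
    (h0 : tsneGrad α p y = 0) (c : Pt d) : tsneHess α p y (trv n c) = 0 := by
  by_cases hdiff : DifferentiableAt ℝ (tsneGrad α p) y
  · have hγ : HasDerivAt (fun t : ℝ => y + t • trv n c) (trv n c) 0 := by
      have h1 : HasDerivAt (fun t : ℝ => t • trv n c) ((1 : ℝ) • trv n c) 0 :=
        (hasDerivAt_id 0).smul_const _
      simpa using h1.const_add y
    have hH' : HasFDerivAt (tsneGrad α p) (tsneHess α p y) (y + (0 : ℝ) • trv n c) := by
      simpa [tsneHess] using hdiff.hasFDerivAt
    have hcomp := HasFDerivAt.comp_hasDerivAt (f := fun t : ℝ => y + t • trv n c) 0 hH' hγ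
    have hzero : ((tsneGrad α p) ∘ fun t : ℝ => y + t • trv n c) = fun _ => 0 := by
      funext t
      have he : y + t • trv n c = y + trv n (t • c) := rfl
      simp only [Function.comp]
      rw [he, tsneGrad_translate, h0]
    rw [hzero] at hcomp
    exact hcomp.unique (hasDerivAt_const 0 0)
  · unfold tsneHess
    rw [fderiv_zero_of_not_differentiableAt hdiff]
    simp

lemma embRotIso_zero {a b : Fin d} (hab : a ≠ b) (y : Emb n d) :
    embRotIso n 0 hab y = y := by
  ext q
  rw [embRotIso_apply 0 hab]
  obtain ⟨i, e⟩ := q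
  simp only [rotF, Real.cos_zero, Real.sin_zero, pt]
  by_cases h1 : e = a
  · subst h1; simp
  · by_cases h2 : e = b
    · subst h2; simp [h1]
    · simp [h1, h2]

lemma tsneHess_rot (α : ℝ) (p : Fin n → Fin n → ℝ) {y : Emb n d}
    (h0 : tsneGrad α p y = 0) {a b : Fin d} (hab : a ≠ b) :
    tsneHess α p y (Jvec a b y) = 0 := by
  by_cases hdiff : DifferentiableAt ℝ (tsneGrad α p) y
  · set u : Emb n d := WithLp.toLp 2 (fun q => if q.2 = a ∨ q.2 = b then y q else 0) with hu
    set v : Emb n d := WithLp.toLp 2 (fun q => if q.2 = a ∨ q.2 = b then 0 else y q) with hv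
    set w : Emb n d := Jvec a b y with hw
    have hcurve : (fun t : ℝ => (embRotIso n t hab y : Emb n d)) =
        fun t => Real.cos t • u + Real.sin t • w + v := by
      funext t; ext q
      rw [embRotIso_apply t hab]
      obtain ⟨i, e⟩ := q
      simp only [rotF, pt, PiLp.add_apply, PiLp.smul_apply, smul_eq_mul, hu, hv, hw, Jvec, PiLp.toLp_apply]
      by_cases h1 : e = a
      · subst h1; simp [hab, hab.symm]; ring
      · by_cases h2 : e = b
        · subst h2; simp [h1, hab, hab.symm]; ring
        · simp [h1, h2]
    have hderiv : HasDerivAt (fun t : ℝ => Real.cos t • u + Real.sin t • w + v) w 0 := by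
      have h1 := (Real.hasDerivAt_cos 0).smul_const u
      have h2 := (Real.hasDerivAt_sin 0).smul_const w
      have h3 := (h1.add h2).add_const v
      simpa using h3
    have hγ : HasDerivAt (fun t : ℝ => (embRotIso n t hab y : Emb n d)) w 0 := by
      rw [hcurve]; exact hderiv
    have hH' : HasFDerivAt (tsneGrad α p) (tsneHess α p y) (embRotIso n 0 hab y) := by
      rw [embRotIso_zero hab]; exact hdiff.hasFDerivAt
    have hcomp := HasFDerivAt.comp_hasDerivAt (f := fun t : ℝ => (embRotIso n t hab y : Emb n d)) 0 hH' hγ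
    have hzero : ((tsneGrad α p) ∘ fun t : ℝ => (embRotIso n t hab y : Emb n d)) =
        fun _ => 0 := by
      funext t
      exact tsneGrad_rot_zero α p h0 t hab
    rw [hzero] at hcomp
    exact hcomp.unique (hasDerivAt_const 0 0)
  · unfold tsneHess
    rw [fderiv_zero_of_not_differentiableAt hdiff]
    simp

end Aux6

/-- At a critical point `y` of the t-SNE loss whose points affinely span
`ℝ^d`, the rank of the Hessian `∇²L_α(y)` is at most `nd - d(d+1)/2`. -/
theorem tsne_hessian_rank_le
    (n d : ℕ) (hn : 3 ≤ n) (hd : 1 ≤ d)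
    (α : ℝ) (hα : 0 < α) (p : Fin n → Fin n → ℝ) (hp : IsAffinity p)
    (y : Emb n d) (hy : y ∈ Dset n d) (hcrit : tsneGrad α p y = 0)
    (hspan : affineSpan ℝ (Set.range (pt y)) = ⊤) :
    hessRank α p y ≤ n * d - d * (d + 1) / 2 := by
  classical
  -- the index type of our family of kernel vectors
  set S := {q : Fin d × Fin d // q.1 < q.2} with hS
  set c := Fintype.card S with hc
  -- the coordinate vector
  let ed : Fin d → Pt d := fun e => (WithLp.toLp 2 (fun f => if f = e then 1 else 0) : Pt d)
  -- the family of kernel vectors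
  let v : (Fin d ⊕ S) → Emb n d :=
    Sum.elim (fun e => trv n (ed e)) (fun q => Jvec q.1.1 q.1.2 y)
  have hker : ∀ i, tsneHess α p y (v i) = 0 := by
    rintro (e | q)
    · exact tsneHess_trv α p hcrit (ed e)
    · exact tsneHess_rot α p hcrit (ne_of_lt q.2)
  -- linear independence
  have hli : LinearIndependent ℝ v := by
    rw [Fintype.linearIndependent_iff]
    intro g hsum
    set t : Fin d → ℝ := fun e => g (Sum.inl e) with ht
    set s : S → ℝ := fun q => g (Sum.inr q) with hs
    -- componentwise equations
    have hcomp : ∀ (i : Fin n) (e : Fin d),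
        t e + ∑ q : S, s q * (if e = q.1.1 then -(y (i, q.1.2))
          else if e = q.1.2 then y (i, q.1.1) else 0) = 0 := by
      intro i e
      have h1 : (∑ k, g k • v k) (i, e) = 0 := congrArg (fun w : Emb n d => w (i, e)) hsum
      rw [WithLp.ofLp_sum, Finset.sum_apply] at h1
      rw [Fintype.sum_sum_type] at h1
      simp only [v, Sum.elim_inl, Sum.elim_inr, PiLp.smul_apply, smul_eq_mul, trv, Jvec, PiLp.toLp_apply] at h1
      have h2 : ∑ e' : Fin d, g (Sum.inl e') * ed e' e = t e := by
        simp only [ed, mul_ite, mul_one, mul_zero, PiLp.toLp_apply]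
        simp [Finset.sum_ite_eq, ht]
      rw [h2] at h1
      exact h1
    -- the associated linear map
    let LM : Pt d →ₗ[ℝ] (Fin d → ℝ) :=
      { toFun := fun x e => ∑ q : S, s q * (if e = q.1.1 then -(x q.1.2)
          else if e = q.1.2 then x q.1.1 else 0)
        map_add' := by
          intro x z
          funext e
          simp only [PiLp.add_apply, Pi.add_apply]
          rw [← Finset.sum_add_distrib]
          refine Finset.sum_congr rfl fun q _ => ?_
          split_ifs <;> ring
        map_smul' := by
          intro r x
          funext e
          simp only [PiLp.smul_apply, smul_eq_mul, RingHom.id_apply, Pi.smul_apply]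
          rw [Finset.mul_sum]
          refine Finset.sum_congr rfl fun q _ => ?_
          split_ifs <;> ring }
    have hLMpt : ∀ i : Fin n, LM (pt y i) = fun e => - t e := by
      intro i
      funext e
      have := hcomp i e
      have h3 : LM (pt y i) e = ∑ q : S, s q * (if e = q.1.1 then -(y (i, q.1.2))
          else if e = q.1.2 then y (i, q.1.1) else 0) := rfl
      rw [h3]
      linarith
    have hvs : vectorSpan ℝ (Set.range (pt y)) = ⊤ := by
      rw [← direction_affineSpan, hspan]
      exact AffineSubspace.direction_top ℝ _ _
    have hsub : vectorSpan ℝ (Set.range (pt y)) ≤ LinearMap.ker LM := by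
      rw [vectorSpan_def]
      rw [Submodule.span_le]
      rintro u hu
      rw [Set.mem_vsub] at hu
      obtain ⟨x1, ⟨i, rfl⟩, x2, ⟨j, rfl⟩, rfl⟩ := hu
      have : LM (pt y i -ᵥ pt y j) = 0 := by
        rw [vsub_eq_sub, map_sub, hLMpt i, hLMpt j, sub_self]
      exact this
    have hLM0 : LM = 0 := by
      rw [← LinearMap.ker_eq_top]
      rw [← top_le_iff]
      rw [← hvs]
      exact hsub
    -- translations coefficients vanish
    have ht0 : ∀ e, t e = 0 := by
      intro e
      have h4 := hcomp ⟨0, by omega⟩ e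
      have h5 : LM (pt y ⟨0, by omega⟩) e = ∑ q : S, s q * (if e = q.1.1
          then -(y (⟨0, by omega⟩, q.1.2)) else if e = q.1.2 then y (⟨0, by omega⟩, q.1.1)
          else 0) := rfl
      rw [hLM0] at h5
      simp only [LinearMap.zero_apply, Pi.zero_apply] at h5
      rw [← h5] at h4
      simpa using h4
    -- rotation coefficients vanish
    have hs0 : ∀ q : S, s q = 0 := by
      rintro ⟨⟨a, b⟩, hlt⟩
      have h6 : LM (ed b) a = 0 := by rw [hLM0]; rfl
      have h7 : LM (ed b) a = - s ⟨(a, b), hlt⟩ := by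
        have h8 : LM (ed b) a = ∑ q : S, s q * (if a = q.1.1 then -(ed b q.1.2)
            else if a = q.1.2 then ed b q.1.1 else 0) := rfl
        rw [h8]
        rw [Finset.sum_eq_single (⟨(a, b), hlt⟩ : S)]
        · simp [ed]
        · rintro ⟨⟨a', b'⟩, hlt'⟩ _ hne
          simp only [ed]
          by_cases h1 : a = a'
          · subst h1
            have hbb : ¬ (b' = b) := by
              intro hb; subst hb; exact hne rfl
            simp [hbb]
          · by_cases h2 : a = b'
            · subst h2
              have hab' : ¬ (a' = b) := by
                intro hb; subst hb
                exact absurd (hlt'.trans hlt) (lt_irrefl _)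
              simp [h1, hab']
            · simp [h1, h2]
        · intro h; exact absurd (Finset.mem_univ _) h
      rw [h6] at h7
      linarith
    rintro (e | q)
    · exact ht0 e
    · exact hs0 q
  -- counting
  have h2c : 2 * c + d = d * d := by
    have e1 : c = (Finset.univ.filter fun q : Fin d × Fin d => q.1 < q.2).card :=
      Fintype.card_subtype _
    have e2 : (Finset.univ.filter fun q : Fin d × Fin d => q.2 < q.1).card
        = (Finset.univ.filter fun q : Fin d × Fin d => q.1 < q.2).card := by
      refine Finset.card_equiv (Equiv.prodComm _ _) ?_
      intro q
      simp [Equiv.prodComm]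
    have e3 : (Finset.univ.filter fun q : Fin d × Fin d => q.1 = q.2).card = d := by
      have := Finset.card_nbij' (s := Finset.univ.filter fun q : Fin d × Fin d => q.1 = q.2)
        (t := (Finset.univ : Finset (Fin d)))
        (fun q => q.1) (fun e => (e, e)) (by simp) (by simp)
        (by rintro ⟨x1, x2⟩ hx; simp only [Finset.mem_coe, Finset.mem_filter] at hx; simp [hx.2]) (by intro e _; rfl)
      rw [this, Finset.card_univ, Fintype.card_fin]
    have e4 : (Finset.univ.filter fun q : Fin d × Fin d => q.1 < q.2).card
        + (Finset.univ.filter fun q : Fin d × Fin d => ¬ q.1 < q.2).card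
        = d * d := by
      rw [Finset.card_filter_add_card_filter_not]
      rw [Finset.card_univ, Fintype.card_prod, Fintype.card_fin]
    have e5 : (Finset.univ.filter fun q : Fin d × Fin d => ¬ q.1 < q.2)
        = (Finset.univ.filter fun q : Fin d × Fin d => q.1 = q.2)
          ∪ (Finset.univ.filter fun q : Fin d × Fin d => q.2 < q.1) := by
      ext q
      simp only [Finset.mem_filter, Finset.mem_union, Finset.mem_univ, true_and]
      rw [Fin.ext_iff, Fin.lt_def, Fin.lt_def]
      omega
    have e6 : Disjoint (Finset.univ.filter fun q : Fin d × Fin d => q.1 = q.2)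
        (Finset.univ.filter fun q : Fin d × Fin d => q.2 < q.1) := by
      rw [Finset.disjoint_left]
      intro q h1 h2
      simp only [Finset.mem_filter, Finset.mem_univ, true_and] at h1 h2
      rw [h1] at h2
      exact absurd h2 (lt_irrefl _)
    rw [e5, Finset.card_union_of_disjoint e6, e3, e2] at e4
    linarith [e1 ▸ e4]
  have hcount : d + c = d * (d + 1) / 2 := by
    have hkey : 2 * (d + c) = d * (d + 1) := by
      have h9 : d * (d + 1) = d * d + d := by ring
      rw [h9]
      linarith
    have h10 : d + c = 2 * (d + c) / 2 := (Nat.mul_div_cancel_left _ (by norm_num)).symm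
    rw [h10, hkey]
  -- rank-nullity
  have hrank := LinearMap.finrank_range_add_finrank_ker (tsneHess α p y).toLinearMap
  have hfin : Module.finrank ℝ (Emb n d) = n * d := by
    rw [finrank_euclideanSpace, Fintype.card_prod, Fintype.card_fin, Fintype.card_fin]
  have hspan_le : Submodule.span ℝ (Set.range v)
      ≤ LinearMap.ker (tsneHess α p y).toLinearMap := by
    rw [Submodule.span_le]
    rintro _ ⟨i, rfl⟩
    rw [SetLike.mem_coe, LinearMap.mem_ker]
    exact hker i
  have hsp : Module.finrank ℝ (Submodule.span ℝ (Set.range v)) = d + c := by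
    rw [finrank_span_eq_card hli, Fintype.card_sum, Fintype.card_fin]
  have hker_ge : d + c ≤ Module.finrank ℝ (LinearMap.ker (tsneHess α p y).toLinearMap) := by
    rw [← hsp]
    exact Submodule.finrank_mono hspan_le
  have h1 : hessRank α p y
      + Module.finrank ℝ (LinearMap.ker (tsneHess α p y).toLinearMap) = n * d := by
    rw [← hfin]
    exact hrank
  rw [← hcount]
  generalize hN : n * d = N at h1
  omega
end
end
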